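/- arXiv:1404.5148 — 10 statements merged into one kernel-verified Lean document; each statement's English description precedes it below -/
import Mathlib

section
/- Let ω₀ > 0, b₁, b₂ ∈ ℝ, and λ ∈ ℂ with λ ≠ 0. Then λ is an eigenvalue of the nonlocal problem NP(ω₀, b₁, b₂) if and only if sinh(λω₀) · (2·cosh(λω₀) + b₁ + b₂) = 0. -/
/-!
On an interval containing `0`, every solution of `φ'' = λ²φ` is `A cosh(λω) + B sinh(λω)`
with `A = φ(0)`, `B = φ'(0)/λ`: its Wronskians with `cosh(λω)` and `sinh(λω)` are constant,
and `cosh² - sinh² = 1` recovers `φ` from them. The two nonlocal boundary conditions are then a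
homogeneous linear system in `(A, B)`, which has a nonzero solution iff its determinant
`sinh(λω₀) (2 cosh(λω₀) + b₁ + b₂)` vanishes; a nonzero `(A, B)` gives a solution that does not
vanish near `0`, since it and its derivative at `0` are `A` and `λB`.
-/

open Real Set

/-- `lam` is an eigenvalue of the nonlocal problem `NP(ω₀, b₁, b₂)`:
there is a twice differentiable `φ : ℝ → ℂ`, not identically zero on `[-ω₀, ω₀]`,
with `φ'' = lam² φ` on `[-ω₀, ω₀]`, `φ(-ω₀) + b₁ φ(0) = 0` and `φ(ω₀) + b₂ φ(0) = 0`. -/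
def NPEigen (ω₀ b₁ b₂ : ℝ) (lam : ℂ) : Prop :=
  ∃ φ : ℝ → ℂ,
    Differentiable ℝ φ ∧ Differentiable ℝ (deriv φ) ∧
    (∃ ω ∈ Icc (-ω₀) ω₀, φ ω ≠ 0) ∧
    (∀ ω ∈ Icc (-ω₀) ω₀, deriv (deriv φ) ω = lam ^ 2 * φ ω) ∧
    φ (-ω₀) + (b₁ : ℂ) * φ 0 = 0 ∧ φ ω₀ + (b₂ : ℂ) * φ 0 = 0

noncomputable def wronskian (φ ψ : ℝ → ℂ) (x : ℝ) : ℂ :=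
  φ x * deriv ψ x - deriv φ x * ψ x

theorem wronskian_eq_of_deriv_deriv_eq_mul {φ ψ q : ℝ → ℂ} {a b : ℝ}
    (hφ : Differentiable ℝ φ) (hφ' : Differentiable ℝ (deriv φ))
    (hψ : Differentiable ℝ ψ) (hψ' : Differentiable ℝ (deriv ψ))
    (hφq : ∀ x ∈ Icc a b, deriv (deriv φ) x = q x * φ x)
    (hψq : ∀ x ∈ Icc a b, deriv (deriv ψ) x = q x * ψ x) :
    ∀ x ∈ Icc a b, ∀ y ∈ Icc a b, wronskian φ ψ x = wronskian φ ψ y := by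
  have hW : ∀ x ∈ Icc a b, HasDerivAt (wronskian φ ψ) 0 x := by
    intro x hx
    refine (((hφ x).hasDerivAt.mul (hψ' x).hasDerivAt).sub
      ((hφ' x).hasDerivAt.mul (hψ x).hasDerivAt)).congr_deriv ?_
    rw [hφq x hx, hψq x hx]
    ring
  have hconst : ∀ x ∈ Icc a b, wronskian φ ψ x = wronskian φ ψ a :=
    constant_of_has_deriv_right_zero
      (fun x hx => (hW x hx).continuousAt.continuousWithinAt)
      (fun x hx => (hW x (Ico_subset_Icc_self hx)).hasDerivWithinAt)
  intro x hx y hy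
  rw [hconst x hx, hconst y hy]

noncomputable def coshSinhComb (lam A B : ℂ) (ω : ℝ) : ℂ :=
  A * Complex.cosh (lam * ω) + B * Complex.sinh (lam * ω)

section coshSinhComb

variable (lam A B : ℂ)

theorem hasDerivAt_coshSinhComb (x : ℝ) :
    HasDerivAt (coshSinhComb lam A B) (coshSinhComb lam (lam * B) (lam * A) x) x := by
  have hlin : HasDerivAt (fun ω : ℝ => lam * (ω : ℂ)) lam x := by
    simpa using ((hasDerivAt_id x).ofReal_comp).const_mul lam
  refine (((Complex.hasDerivAt_cosh _).comp x hlin).const_mul A |>.add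
    (((Complex.hasDerivAt_sinh _).comp x hlin).const_mul B)).congr_deriv ?_
  simp only [coshSinhComb]
  ring

theorem differentiable_coshSinhComb : Differentiable ℝ (coshSinhComb lam A B) :=
  fun x => (hasDerivAt_coshSinhComb lam A B x).differentiableAt

theorem deriv_coshSinhComb :
    deriv (coshSinhComb lam A B) = coshSinhComb lam (lam * B) (lam * A) :=
  funext fun x => (hasDerivAt_coshSinhComb lam A B x).deriv

theorem differentiable_deriv_coshSinhComb : Differentiable ℝ (deriv (coshSinhComb lam A B)) := by
  rw [deriv_coshSinhComb]
  exact differentiable_coshSinhComb _ _ _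

theorem deriv_deriv_coshSinhComb (x : ℝ) :
    deriv (deriv (coshSinhComb lam A B)) x = lam ^ 2 * coshSinhComb lam A B x := by
  simp only [deriv_coshSinhComb, coshSinhComb]
  ring

@[simp]
theorem coshSinhComb_zero : coshSinhComb lam A B 0 = A := by
  simp [coshSinhComb]

theorem coshSinhComb_eventuallyEq_zero_iff (hlam : lam ≠ 0) :
    coshSinhComb lam A B =ᶠ[nhds 0] 0 ↔ A = 0 ∧ B = 0 := by
  constructor
  · intro h
    have hA : A = 0 := by simpa using h.eq_of_nhds
    have hB : lam * B = 0 := by simpa [deriv_coshSinhComb] using h.deriv_eq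
    exact ⟨hA, (mul_eq_zero.mp hB).resolve_left hlam⟩
  · rintro ⟨rfl, rfl⟩
    exact Filter.Eventually.of_forall fun x => by simp [coshSinhComb]

end coshSinhComb

theorem eqOn_coshSinhComb_of_deriv_deriv_eq {lam : ℂ} {φ : ℝ → ℂ} {a b : ℝ} (hlam : lam ≠ 0)
    (h0 : (0 : ℝ) ∈ Icc a b) (hφ : Differentiable ℝ φ) (hφ' : Differentiable ℝ (deriv φ))
    (hode : ∀ x ∈ Icc a b, deriv (deriv φ) x = lam ^ 2 * φ x) :
    EqOn φ (coshSinhComb lam (φ 0) (deriv φ 0 / lam)) (Icc a b) := by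
  intro x hx
  have hW : ∀ A B, wronskian φ (coshSinhComb lam A B) x = wronskian φ (coshSinhComb lam A B) 0 :=
    fun A B => wronskian_eq_of_deriv_deriv_eq_mul hφ hφ' (differentiable_coshSinhComb lam A B)
      (differentiable_deriv_coshSinhComb lam A B) hode
      (fun y _ => deriv_deriv_coshSinhComb lam A B y) x hx 0 h0
  have hS := hW 0 1
  have hC := hW 1 0
  simp only [wronskian, deriv_coshSinhComb, coshSinhComb_zero] at hS hC
  simp only [coshSinhComb] at hS hC ⊢
  have hpyth := Complex.cosh_sq_sub_sinh_sq (lam * x)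
  field_simp
  linear_combination Complex.cosh (lam * x) * hS - Complex.sinh (lam * x) * hC - lam * φ x * hpyth

open scoped Matrix

/-- Row `i` is the `i`-th boundary condition applied to `A cosh(λω) + B sinh(λω)`, as a linear
form in `(A, B)`. -/
noncomputable def npBoundaryMatrix (ω₀ b₁ b₂ : ℝ) (lam : ℂ) : Matrix (Fin 2) (Fin 2) ℂ :=
  !![Complex.cosh (lam * ω₀) + b₁, -Complex.sinh (lam * ω₀);
     Complex.cosh (lam * ω₀) + b₂, Complex.sinh (lam * ω₀)]

section npBoundaryMatrix

variable (ω₀ b₁ b₂ : ℝ) (lam : ℂ)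

theorem det_npBoundaryMatrix :
    (npBoundaryMatrix ω₀ b₁ b₂ lam).det =
      Complex.sinh (lam * ω₀) * (2 * Complex.cosh (lam * ω₀) + b₁ + b₂) := by
  rw [npBoundaryMatrix, Matrix.det_fin_two_of]
  ring

theorem npBoundaryMatrix_mulVec_eq_zero_iff (v : Fin 2 → ℂ) :
    npBoundaryMatrix ω₀ b₁ b₂ lam *ᵥ v = 0 ↔
      coshSinhComb lam (v 0) (v 1) (-ω₀) + b₁ * coshSinhComb lam (v 0) (v 1) 0 = 0 ∧
        coshSinhComb lam (v 0) (v 1) ω₀ + b₂ * coshSinhComb lam (v 0) (v 1) 0 = 0 := by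
  simp only [funext_iff, Fin.forall_fin_two, npBoundaryMatrix, Matrix.mulVec, dotProduct,
    Fin.sum_univ_two, coshSinhComb, Matrix.of_apply, Matrix.cons_val', Matrix.cons_val_zero,
    Matrix.cons_val_fin_one, Matrix.cons_val_one, Pi.zero_apply, Complex.ofReal_neg, mul_neg,
    Complex.cosh_neg, Complex.sinh_neg, Complex.ofReal_zero, mul_zero, Complex.cosh_zero,
    Complex.sinh_zero]
  refine and_congr ?_ ?_ <;> ring_nf

end npBoundaryMatrix

theorem npEigen_iff_exists_mulVec_eq_zero {ω₀ b₁ b₂ : ℝ} {lam : ℂ} (hω : 0 < ω₀)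
    (hlam : lam ≠ 0) :
    NPEigen ω₀ b₁ b₂ lam ↔ ∃ v ≠ 0, npBoundaryMatrix ω₀ b₁ b₂ lam *ᵥ v = 0 := by
  have h0 : (0 : ℝ) ∈ Icc (-ω₀) ω₀ := ⟨by linarith, hω.le⟩
  constructor
  · rintro ⟨φ, hφ, hφ', ⟨ω, hωmem, hφω⟩, hode, hbc₁, hbc₂⟩
    have hφeq := eqOn_coshSinhComb_of_deriv_deriv_eq hlam h0 hφ hφ' hode
    refine ⟨![φ 0, deriv φ 0 / lam], fun hv => hφω ?_, ?_⟩
    · have hφeqω := hφeq hωmem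
      rw [show φ 0 = 0 from congrFun hv 0, show deriv φ 0 / lam = 0 from congrFun hv 1] at hφeqω
      simpa [coshSinhComb] using hφeqω
    · rw [npBoundaryMatrix_mulVec_eq_zero_iff]
      simpa [← hφeq h0, ← hφeq ⟨le_rfl, by linarith⟩, ← hφeq ⟨by linarith, le_rfl⟩] using
        And.intro hbc₁ hbc₂
  · rintro ⟨v, hv, hMv⟩
    refine ⟨coshSinhComb lam (v 0) (v 1), differentiable_coshSinhComb _ _ _,
      differentiable_deriv_coshSinhComb _ _ _, ?_, fun x _ => deriv_deriv_coshSinhComb _ _ _ x,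
      (npBoundaryMatrix_mulVec_eq_zero_iff _ _ _ _ v).1 hMv⟩
    by_contra! hzero
    have hev : coshSinhComb lam (v 0) (v 1) =ᶠ[nhds 0] 0 :=
      Filter.eventually_of_mem (Icc_mem_nhds (by linarith) hω) hzero
    obtain ⟨hv₀, hv₁⟩ := (coshSinhComb_eventuallyEq_zero_iff _ _ _ hlam).1 hev
    exact hv (funext (Fin.forall_fin_two.2 ⟨hv₀, hv₁⟩))

theorem nonzero_eigenvalue_iff (ω₀ b₁ b₂ : ℝ) (hω : ω₀ > 0) (lam : ℂ) (hlam : lam ≠ 0) :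
    NPEigen ω₀ b₁ b₂ lam ↔
      Complex.sinh (lam * (ω₀ : ℂ)) *
        (2 * Complex.cosh (lam * (ω₀ : ℂ)) + (b₁ : ℂ) + (b₂ : ℂ)) = 0 := by
  rw [npEigen_iff_exists_mulVec_eq_zero hω hlam, Matrix.exists_mulVec_eq_zero_iff,
    det_npBoundaryMatrix]
end

section
/- Let b₁, b₂ ∈ ℝ with b₁ + b₂ ≠ 0, and let m be an odd integer. Then the nonlocal problem NP(π/2, b₁, b₂) has no eigenvalue λ ∈ ℂ with Im λ = m. -/
open Real Set

/-!
A solution of `φ'' = λ²φ` with `λ ≠ 0` is `A cosh (λω) + B sinh (λω)`: its Wronskians with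
`cosh (λ·)` and `sinh (λ·)` are constant. Put `z = λπ/2`; then `Im z = mπ/2` with `m` odd, so
`cos (Im z) = 0`, whence `Re (cosh z) = 0` and `sinh z ≠ 0`. Adding the two boundary conditions
gives `A (2 cosh z + b₁ + b₂) = 0`, and the second factor has real part `b₁ + b₂ ≠ 0`, so `A = 0`;
then `B sinh z = φ(π/2) = 0` gives `B = 0`, and `φ` vanishes on `[-π/2, π/2]`.
-/

namespace Complex

theorem cosh_re (z : ℂ) : (cosh z).re = Real.cosh z.re * Real.cos z.im := by
  conv_lhs => rw [← re_add_im z]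
  rw [cosh_add, cosh_mul_I, sinh_mul_I, ← ofReal_cosh, ← ofReal_sinh]
  simp [cos_ofReal_re, sin_ofReal_re]

theorem sinh_im (z : ℂ) : (sinh z).im = Real.cosh z.re * Real.sin z.im := by
  conv_lhs => rw [← re_add_im z]
  rw [sinh_add, cosh_mul_I, sinh_mul_I, ← ofReal_cosh, ← ofReal_sinh]
  simp [cos_ofReal_re, sin_ofReal_re]

theorem cosh_re_eq_zero_of_cos_im_eq_zero {z : ℂ} (h : Real.cos z.im = 0) :
    (cosh z).re = 0 := by
  rw [cosh_re, h, mul_zero]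

theorem sinh_ne_zero_of_cos_im_eq_zero {z : ℂ} (h : Real.cos z.im = 0) :
    sinh z ≠ 0 := by
  intro hz
  have him := congrArg im hz
  rw [sinh_im, zero_im] at him
  have hcosh := Real.cosh_pos z.re
  rcases Real.cos_eq_zero_iff_sin_eq.mp h with h1 | h1 <;> rw [h1] at him <;> linarith

end Complex

theorem Real.cos_odd_mul_pi_div_two {m : ℤ} (hm : Odd m) : Real.cos (m * (π / 2)) = 0 := by
  obtain ⟨k, rfl⟩ := hm
  exact Real.cos_eq_zero_iff.mpr ⟨k, by push_cast; ring⟩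

section Wronskian

variable {𝕜 : Type*} [NormedField 𝕜] [NormedAlgebra ℝ 𝕜] {φ ψ : ℝ → 𝕜} {c : 𝕜} {a b : ℝ}

theorem wronskian_eqOn_Icc (hφ : Differentiable ℝ φ) (hφ' : Differentiable ℝ (deriv φ))
    (hψ : Differentiable ℝ ψ) (hψ' : Differentiable ℝ (deriv ψ))
    (hφ'' : ∀ x ∈ Icc a b, deriv (deriv φ) x = c * φ x)
    (hψ'' : ∀ x ∈ Icc a b, deriv (deriv ψ) x = c * ψ x) :
    ∀ x ∈ Icc a b, φ x * deriv ψ x - deriv φ x * ψ x = φ a * deriv ψ a - deriv φ a * ψ a := by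
  have hW : ∀ x, HasDerivAt (fun x => φ x * deriv ψ x - deriv φ x * ψ x)
      (φ x * deriv (deriv ψ) x - deriv (deriv φ) x * ψ x) x := fun x =>
    (((hφ x).hasDerivAt.mul (hψ' x).hasDerivAt).sub
      ((hφ' x).hasDerivAt.mul (hψ x).hasDerivAt)).congr_deriv (by ring)
  refine constant_of_has_deriv_right_zero
    (fun x _ => (hW x).continuousAt.continuousWithinAt) fun x hx => ?_
  have hx := Ico_subset_Icc_self hx
  convert (hW x).hasDerivWithinAt using 1
  rw [hφ'' x hx, hψ'' x hx]
  ring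

end Wronskian

section HyperbolicSolutions

variable (lam : ℂ)

theorem hasDerivAt_cosh_mul (x : ℝ) :
    HasDerivAt (fun x : ℝ => Complex.cosh (lam * x)) (lam * Complex.sinh (lam * x)) x := by
  simpa [mul_comm] using ((hasDerivAt_id (x : ℂ)).const_mul lam).ccosh.comp_ofReal

theorem hasDerivAt_sinh_mul (x : ℝ) :
    HasDerivAt (fun x : ℝ => Complex.sinh (lam * x)) (lam * Complex.cosh (lam * x)) x := by
  simpa [mul_comm] using ((hasDerivAt_id (x : ℂ)).const_mul lam).csinh.comp_ofReal

theorem deriv_cosh_mul :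
    deriv (fun x : ℝ => Complex.cosh (lam * x)) = fun x : ℝ => lam * Complex.sinh (lam * x) :=
  funext fun x => (hasDerivAt_cosh_mul lam x).deriv

theorem deriv_sinh_mul :
    deriv (fun x : ℝ => Complex.sinh (lam * x)) = fun x : ℝ => lam * Complex.cosh (lam * x) :=
  funext fun x => (hasDerivAt_sinh_mul lam x).deriv

theorem deriv_deriv_cosh_mul (x : ℝ) :
    deriv (deriv fun x : ℝ => Complex.cosh (lam * x)) x = lam ^ 2 * Complex.cosh (lam * x) := by
  rw [deriv_cosh_mul, ((hasDerivAt_sinh_mul lam x).const_mul lam).deriv, sq, mul_assoc]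

theorem deriv_deriv_sinh_mul (x : ℝ) :
    deriv (deriv fun x : ℝ => Complex.sinh (lam * x)) x = lam ^ 2 * Complex.sinh (lam * x) := by
  rw [deriv_sinh_mul, ((hasDerivAt_cosh_mul lam x).const_mul lam).deriv, sq, mul_assoc]

end HyperbolicSolutions

theorem exists_eq_cosh_mul_add_sinh_mul {φ : ℝ → ℂ} {lam : ℂ} {a b : ℝ} (hlam : lam ≠ 0)
    (hφ : Differentiable ℝ φ) (hφ' : Differentiable ℝ (deriv φ))
    (hφ'' : ∀ x ∈ Icc a b, deriv (deriv φ) x = lam ^ 2 * φ x) :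
    ∃ A B : ℂ, ∀ x ∈ Icc a b, φ x = A * Complex.cosh (lam * x) + B * Complex.sinh (lam * x) := by
  set C := fun x : ℝ => Complex.cosh (lam * x)
  set S := fun x : ℝ => Complex.sinh (lam * x)
  have hC : Differentiable ℝ C := fun x => (hasDerivAt_cosh_mul lam x).differentiableAt
  have hS : Differentiable ℝ S := fun x => (hasDerivAt_sinh_mul lam x).differentiableAt
  have hC' : Differentiable ℝ (deriv C) := by
    rw [deriv_cosh_mul]
    exact fun x => ((hasDerivAt_sinh_mul lam x).const_mul lam).differentiableAt
  have hS' : Differentiable ℝ (deriv S) := by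
    rw [deriv_sinh_mul]
    exact fun x => ((hasDerivAt_cosh_mul lam x).const_mul lam).differentiableAt
  have hWC := wronskian_eqOn_Icc hφ hφ' hC hC' hφ'' fun x _ => deriv_deriv_cosh_mul lam x
  have hWS := wronskian_eqOn_Icc hφ hφ' hS hS' hφ'' fun x _ => deriv_deriv_sinh_mul lam x
  refine ⟨(φ a * deriv S a - deriv φ a * S a) / lam, -(φ a * deriv C a - deriv φ a * C a) / lam,
    fun x hx => ?_⟩
  rw [← hWC x hx, ← hWS x hx, deriv_cosh_mul, deriv_sinh_mul]
  field_simp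
  linear_combination (-lam * φ x) * Complex.cosh_sq_sub_sinh_sq (lam * x)

theorem boundary_coeffs_eq_zero {A B c s : ℂ} {b₁ b₂ : ℝ} (hb : b₁ + b₂ ≠ 0) (hc : c.re = 0)
    (hs : s ≠ 0) (h₁ : A * c - B * s + b₁ * A = 0) (h₂ : A * c + B * s + b₂ * A = 0) :
    A = 0 ∧ B = 0 := by
  have hsum : A * (2 * c + (b₁ + b₂ : ℝ)) = 0 := by push_cast; linear_combination h₁ + h₂
  have hne : 2 * c + ((b₁ + b₂ : ℝ) : ℂ) ≠ 0 := fun h =>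
    hb (by simpa [hc] using congrArg Complex.re h)
  have hA : A = 0 := (mul_eq_zero.mp hsum).resolve_right hne
  subst hA
  exact ⟨rfl, (mul_eq_zero.mp (by simpa using h₂)).resolve_right hs⟩

theorem no_eigenvalue_on_odd_lines (b₁ b₂ : ℝ) (hb : b₁ + b₂ ≠ 0) (m : ℤ) (hm : Odd m) :
    ∀ lam : ℂ, lam.im = (m : ℝ) → ¬ NPEigen (π / 2) b₁ b₂ lam := by
  rintro lam hlam ⟨φ, hφ, hφ', ⟨ω, hω, hφω⟩, hode, hbc₁, hbc₂⟩
  have hlam0 : lam ≠ 0 := by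
    rintro rfl
    rw [Complex.zero_im, eq_comm, Int.cast_eq_zero] at hlam
    simp [hlam] at hm
  obtain ⟨A, B, hφAB⟩ := exists_eq_cosh_mul_add_sinh_mul hlam0 hφ hφ' hode
  set z := lam * (π / 2 : ℂ)
  have hcos : Real.cos z.im = 0 := by simpa [z, hlam] using Real.cos_odd_mul_pi_div_two hm
  have hpi : 0 ≤ π / 2 := by positivity
  have h0 : φ 0 = A := by simpa using hφAB 0 ⟨by linarith, hpi⟩
  have hneg : φ (-(π / 2)) = A * Complex.cosh z - B * Complex.sinh z := by
    simpa [z, mul_neg, sub_eq_add_neg] using hφAB _ (left_mem_Icc.2 (by linarith))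
  have hpos : φ (π / 2) = A * Complex.cosh z + B * Complex.sinh z := by
    simpa [z] using hφAB _ (right_mem_Icc.2 (by linarith))
  obtain ⟨rfl, rfl⟩ := boundary_coeffs_eq_zero hb
    (Complex.cosh_re_eq_zero_of_cos_im_eq_zero hcos) (Complex.sinh_ne_zero_of_cos_im_eq_zero hcos)
    (by rw [← hneg, ← h0]; exact hbc₁) (by rw [← hpos, ← h0]; exact hbc₂)
  exact hφω (by simpa using hφAB ω hω)
end

section
/- Let b₁, b₂ ∈ ℝ and let k be a nonzero integer with b₁ + b₂ ≠ 2·(−1)^{k+1}, and set λ = 2k·i. Then for every twice differentiable φ⁰ : ℝ → ℂ, not identically zero on [−π/2, π/2], satisfying (φ⁰)''(ω) = λ²·φ⁰(ω) on [−π/2, π/2] together with φ⁰(−π/2) + b₁·φ⁰(0) = 0 and φ⁰(π/2) + b₂·φ⁰(0) = 0, there exists NO twice differentiable φ : ℝ → ℂ with φ''(ω) − λ²·φ(ω) = 2λ·φ⁰(ω) for all ω ∈ [−π/2, π/2] and φ(−π/2) + b₁·φ(0) = 0, φ(π/2) + b₂·φ(0) = 0. (That is, the eigenvalue λ = 2ki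 of NP(π/2, b₁, b₂) has no associated vectors.) -/
/-! With `μ = 2ki` we have `exp (±μπ/2) = (-1)^k`, so every solution of `f'' = μ² f` on
`[-π/2, π/2]` satisfies `f (±π/2) = (-1)^k f 0`, and the boundary conditions force `f 0 = 0`
because `b₁ + b₂ ≠ -2 (-1)^k`. Hence `φ₀ = c (e^{μω} - e^{-μω})` with `c = φ₀'(0) / (2μ)`.
Subtracting the resonant solution `c ω (e^{μω} + e^{-μω})` from an associated function `φ` leaves a
solution of the homogeneous equation, so `φ (±π/2) = (-1)^k (φ 0 ± cπ)`. The boundary conditions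
now give `φ 0 = 0` and then `c = 0`, that is `φ₀ = 0`. -/

open Real Set

theorem hasDerivAt_cexp_const_mul_ofReal (μ : ℂ) (x : ℝ) :
    HasDerivAt (fun t : ℝ => Complex.exp (μ * t)) (μ * Complex.exp (μ * x)) x := by
  simpa [mul_comm] using ((Complex.ofRealCLM.hasDerivAt (x := x)).const_mul μ).cexp

theorem eq_cexp_mul_of_hasDerivAt_eq_const_mul {f : ℝ → ℂ} {ν : ℂ} {a b : ℝ}
    (hf : ∀ x ∈ Icc a b, HasDerivAt f (ν * f x) x) {x y : ℝ} (hx : x ∈ Icc a b)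
    (hy : y ∈ Icc a b) :
    f x = Complex.exp (ν * (x - y)) * f y := by
  set g : ℝ → ℂ := fun t => Complex.exp (-ν * t) * f t
  have hg : ∀ t ∈ Icc a b, HasDerivAt g 0 t := fun t ht => by
    refine ((hasDerivAt_cexp_const_mul_ofReal (-ν) t).mul (hf t ht)).congr_deriv ?_
    ring
  have hconst := constant_of_has_deriv_right_zero
    (fun t ht => (hg t ht).continuousAt.continuousWithinAt)
    (fun t ht => (hg t (Ico_subset_Icc_self ht)).hasDerivWithinAt)
  have hgxy : g x = g y := (hconst x hx).trans (hconst y hy).symm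
  calc f x = Complex.exp (ν * x) * g x := by
        simp only [g, ← mul_assoc, ← Complex.exp_add]; ring_nf; simp
    _ = Complex.exp (ν * (x - y)) * f y := by
        rw [hgxy]; simp only [g, ← mul_assoc, ← Complex.exp_add]; ring_nf

theorem two_mul_eq_of_hasDerivAt_of_eq_sq_mul {f f' f'' : ℝ → ℂ} {μ : ℂ} {a b : ℝ}
    (hf : ∀ x ∈ Icc a b, HasDerivAt f (f' x) x) (hf' : ∀ x ∈ Icc a b, HasDerivAt f' (f'' x) x)
    (hode : ∀ x ∈ Icc a b, f'' x = μ ^ 2 * f x) {x y : ℝ} (hx : x ∈ Icc a b)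
    (hy : y ∈ Icc a b) :
    2 * μ * f x = Complex.exp (μ * (x - y)) * (f' y + μ * f y)
      - Complex.exp (-μ * (x - y)) * (f' y - μ * f y) := by
  have hplus := eq_cexp_mul_of_hasDerivAt_eq_const_mul (f := fun t => f' t + μ * f t) (ν := μ)
    (fun t ht => by
      refine ((hf' t ht).add ((hf t ht).const_mul μ)).congr_deriv ?_
      rw [hode t ht]; ring) hx hy
  have hminus := eq_cexp_mul_of_hasDerivAt_eq_const_mul (f := fun t => f' t - μ * f t) (ν := -μ)
    (fun t ht => by
      refine ((hf' t ht).sub ((hf t ht).const_mul μ)).congr_deriv ?_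
      rw [hode t ht]; ring) hx hy
  linear_combination hplus - hminus

theorem cexp_two_int_mul_I_mul_half_pi (k : ℤ) :
    Complex.exp (2 * k * Complex.I * (π / 2 : ℝ)) = (-1) ^ k := by
  rw [← Complex.exp_pi_mul_I, ← Complex.exp_int_mul]; push_cast; ring_nf

theorem cexp_neg_two_int_mul_I_mul_half_pi (k : ℤ) :
    Complex.exp (-(2 * k * Complex.I * (π / 2 : ℝ))) = (-1) ^ k := by
  rw [Complex.exp_neg, cexp_two_int_mul_I_mul_half_pi, ← inv_zpow, inv_neg_one]

theorem half_pi_mem_Icc : π / 2 ∈ Icc (-(π / 2)) (π / 2) := ⟨by linarith [pi_pos], le_rfl⟩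

theorem neg_half_pi_mem_Icc : -(π / 2) ∈ Icc (-(π / 2)) (π / 2) := ⟨le_rfl, by linarith [pi_pos]⟩

theorem zero_mem_Icc_half_pi : (0 : ℝ) ∈ Icc (-(π / 2)) (π / 2) :=
  ⟨by linarith [pi_pos], by linarith [pi_pos]⟩

theorem two_int_mul_I_ne_zero {k : ℤ} (hk : k ≠ 0) : 2 * (k : ℂ) * Complex.I ≠ 0 := by
  simp [hk]

theorem endpoint_values_of_eq_sq_mul {f f' f'' : ℝ → ℂ} {k : ℤ} (hk : k ≠ 0)
    (hf : ∀ x ∈ Icc (-(π / 2)) (π / 2), HasDerivAt f (f' x) x)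
    (hf' : ∀ x ∈ Icc (-(π / 2)) (π / 2), HasDerivAt f' (f'' x) x)
    (hode : ∀ x ∈ Icc (-(π / 2)) (π / 2), f'' x = (2 * (k : ℂ) * Complex.I) ^ 2 * f x) :
    f (π / 2) = (-1) ^ k * f 0 ∧ f (-(π / 2)) = (-1) ^ k * f 0 := by
  have hplus := two_mul_eq_of_hasDerivAt_of_eq_sq_mul hf hf' hode
    half_pi_mem_Icc zero_mem_Icc_half_pi
  have hminus := two_mul_eq_of_hasDerivAt_of_eq_sq_mul hf hf' hode
    neg_half_pi_mem_Icc zero_mem_Icc_half_pi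
  simp only [Complex.ofReal_zero, sub_zero, Complex.ofReal_neg, mul_neg, neg_mul, neg_neg,
    cexp_two_int_mul_I_mul_half_pi, cexp_neg_two_int_mul_I_mul_half_pi] at hplus hminus
  constructor <;> apply mul_left_cancel₀ (mul_ne_zero two_ne_zero (two_int_mul_I_ne_zero hk))
  · linear_combination hplus
  · linear_combination hminus

theorem eq_zero_of_boundary_conditions {b₁ b₂ : ℝ} {k : ℤ}
    (hb : b₁ + b₂ ≠ 2 * (-1 : ℝ) ^ (k + 1)) {u v w : ℂ} (hsum : u + v = 2 * (-1) ^ k * w)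
    (h₁ : u + b₁ * w = 0) (h₂ : v + b₂ * w = 0) : w = 0 := by
  have hcoeff : ((2 * (-1) ^ k + b₁ + b₂ : ℝ) : ℂ) ≠ 0 := by
    rw [Complex.ofReal_ne_zero, zpow_add₀ (by norm_num), zpow_one] at *
    contrapose! hb
    linarith
  apply (mul_eq_zero.mp _).resolve_left hcoeff
  push_cast
  linear_combination h₁ + h₂ - hsum

theorem hasDerivAt_ofReal_mul_cexp_add_cexp_neg (μ : ℂ) (x : ℝ) :
    HasDerivAt (fun t : ℝ => t * (Complex.exp (μ * t) + Complex.exp (-μ * t)))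
      (Complex.exp (μ * x) + Complex.exp (-μ * x)
        + μ * x * (Complex.exp (μ * x) - Complex.exp (-μ * x))) x := by
  refine ((Complex.ofRealCLM.hasDerivAt (x := x)).mul ((hasDerivAt_cexp_const_mul_ofReal μ x).add
    (hasDerivAt_cexp_const_mul_ofReal (-μ) x))).congr_deriv ?_
  simp only [Complex.ofRealCLM_apply, Complex.ofReal_one, Pi.add_apply]; ring

theorem hasDerivAt_cexp_add_cexp_neg_add_ofReal_mul (μ : ℂ) (x : ℝ) :
    HasDerivAt (fun t : ℝ => Complex.exp (μ * t) + Complex.exp (-μ * t)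
        + μ * t * (Complex.exp (μ * t) - Complex.exp (-μ * t)))
      (2 * μ * (Complex.exp (μ * x) - Complex.exp (-μ * x))
        + μ ^ 2 * x * (Complex.exp (μ * x) + Complex.exp (-μ * x))) x := by
  have hE := hasDerivAt_cexp_const_mul_ofReal μ x
  have hE' := hasDerivAt_cexp_const_mul_ofReal (-μ) x
  refine ((hE.add hE').add (((Complex.ofRealCLM.hasDerivAt (x := x)).const_mul μ).mul
    (hE.sub hE'))).congr_deriv ?_
  simp only [Complex.ofRealCLM_apply, Complex.ofReal_one, Pi.sub_apply]; ring

theorem endpoint_values_of_eq_sq_mul_add_resonant {f f' f'' : ℝ → ℂ} {k : ℤ} (hk : k ≠ 0)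
    (d : ℂ) (hf : ∀ x ∈ Icc (-(π / 2)) (π / 2), HasDerivAt f (f' x) x)
    (hf' : ∀ x ∈ Icc (-(π / 2)) (π / 2), HasDerivAt f' (f'' x) x)
    (hode : ∀ x ∈ Icc (-(π / 2)) (π / 2), f'' x = (2 * (k : ℂ) * Complex.I) ^ 2 * f x
      + d * (Complex.exp (2 * k * Complex.I * x) - Complex.exp (-(2 * k * Complex.I) * x))) :
    2 * (2 * k * Complex.I) * f (π / 2) = (-1) ^ k * (2 * (2 * k * Complex.I) * f 0 + d * π) ∧
      2 * (2 * k * Complex.I) * f (-(π / 2))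
        = (-1) ^ k * (2 * (2 * k * Complex.I) * f 0 - d * π) := by
  set μ : ℂ := 2 * k * Complex.I
  -- `x (e^{μx} + e^{-μx})` is a particular solution of `g'' - μ² g = 2μ (e^{μx} - e^{-μx})`
  obtain ⟨hψ, hψ'⟩ := endpoint_values_of_eq_sq_mul hk
    (f := fun x => 2 * μ * f x - d * (x * (Complex.exp (μ * x) + Complex.exp (-μ * x))))
    (fun x hx => ((hf x hx).const_mul _).sub
      ((hasDerivAt_ofReal_mul_cexp_add_cexp_neg μ x).const_mul d))
    (fun x hx => ((hf' x hx).const_mul _).sub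
      ((hasDerivAt_cexp_add_cexp_neg_add_ofReal_mul μ x).const_mul d))
    (fun x hx => by rw [hode x hx]; ring)
  have hEp : Complex.exp (μ * (π / 2 : ℝ)) = (-1) ^ k := cexp_two_int_mul_I_mul_half_pi k
  have hEm : Complex.exp (-(μ * (π / 2 : ℝ))) = (-1) ^ k := cexp_neg_two_int_mul_I_mul_half_pi k
  simp only [Complex.ofReal_zero, mul_zero, zero_mul, sub_zero, Complex.ofReal_neg, mul_neg,
    neg_mul, neg_neg, hEp, hEm] at hψ hψ'
  push_cast at hψ hψ'
  constructor
  · linear_combination hψ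
  · linear_combination hψ'

theorem no_associated_vector_even_case (b₁ b₂ : ℝ) (k : ℤ) (hk : k ≠ 0)
    (hb : b₁ + b₂ ≠ 2 * (-1 : ℝ) ^ (k + 1)) :
    ∀ φ₀ : ℝ → ℂ,
      Differentiable ℝ φ₀ → Differentiable ℝ (deriv φ₀) →
      (∃ ω ∈ Icc (-(π / 2)) (π / 2), φ₀ ω ≠ 0) →
      (∀ ω ∈ Icc (-(π / 2)) (π / 2),
        deriv (deriv φ₀) ω = ((2 * (k : ℂ)) * Complex.I) ^ 2 * φ₀ ω) →
      φ₀ (-(π / 2)) + (b₁ : ℂ) * φ₀ 0 = 0 →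
      φ₀ (π / 2) + (b₂ : ℂ) * φ₀ 0 = 0 →
      ¬ ∃ φ : ℝ → ℂ,
          Differentiable ℝ φ ∧ Differentiable ℝ (deriv φ) ∧
          (∀ ω ∈ Icc (-(π / 2)) (π / 2),
            deriv (deriv φ) ω - ((2 * (k : ℂ)) * Complex.I) ^ 2 * φ ω
              = 2 * ((2 * (k : ℂ)) * Complex.I) * φ₀ ω) ∧
          φ (-(π / 2)) + (b₁ : ℂ) * φ 0 = 0 ∧
          φ (π / 2) + (b₂ : ℂ) * φ 0 = 0 := by
  intro φ₀ hφ₀ hφ₀' ⟨ω, hω, hφ₀ω⟩ hode₀ hbc₀₁ hbc₀₂ ⟨φ, hφ, hφ', hode, hbc₁, hbc₂⟩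
  set μ : ℂ := 2 * k * Complex.I
  have hμ : 2 * μ ≠ 0 := mul_ne_zero two_ne_zero (two_int_mul_I_ne_zero hk)
  have hφ₀0 : φ₀ 0 = 0 := by
    obtain ⟨hplus, hminus⟩ := endpoint_values_of_eq_sq_mul hk (fun x _ => (hφ₀ x).hasDerivAt)
      (fun x _ => (hφ₀' x).hasDerivAt) hode₀
    exact eq_zero_of_boundary_conditions hb (by rw [hplus, hminus]; ring) hbc₀₁ hbc₀₂
  have hrep₀ : ∀ x ∈ Icc (-(π / 2)) (π / 2),
      2 * μ * φ₀ x = deriv φ₀ 0 * (Complex.exp (μ * x) - Complex.exp (-μ * x)) := fun x hx => by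
    have h := two_mul_eq_of_hasDerivAt_of_eq_sq_mul (fun x _ => (hφ₀ x).hasDerivAt)
      (fun x _ => (hφ₀' x).hasDerivAt) hode₀ hx zero_mem_Icc_half_pi
    simp only [Complex.ofReal_zero, sub_zero, hφ₀0, mul_zero, add_zero] at h
    linear_combination h
  obtain ⟨hplus, hminus⟩ := endpoint_values_of_eq_sq_mul_add_resonant hk (deriv φ₀ 0)
    (fun x _ => (hφ x).hasDerivAt) (fun x _ => (hφ' x).hasDerivAt)
    (fun x hx => by linear_combination hode x hx + hrep₀ x hx)
  have hφ0 : φ 0 = 0 := by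
    refine eq_zero_of_boundary_conditions hb (mul_left_cancel₀ hμ ?_) hbc₁ hbc₂
    linear_combination hplus + hminus
  have hd : deriv φ₀ 0 = 0 := by
    have h : (-1) ^ k * π * deriv φ₀ 0 = 0 := by
      linear_combination 2 * μ * hbc₂ - hplus - 2 * μ * (b₂ + (-1) ^ k) * hφ0
    simpa [Real.pi_ne_zero, zpow_ne_zero] using h
  exact hφ₀ω (mul_left_cancel₀ hμ (by simpa [hd] using hrep₀ ω hω))
end

section
/- Let b₁ ∈ ℝ, set b₂ = −b₁, let k ∈ ℤ and set λ = (2k+1)·i. Then for every twice differentiable φ⁰ : ℝ → ℂ, not identically zero on [−π/2, π/2], satisfying (φ⁰)''(ω) = λ²·φ⁰(ω) on [−π/2, π/2] together with φ⁰(−π/2) + b₁·φ⁰(0) = 0 and φ⁰(π/2) − b₁·φ⁰(0) = 0, there exists NO twice differentiable φ : ℝ → ℂ with φ''(ω) − λ²·φ(ω) = 2λ·φ⁰(ω) for all ω ∈ [−π/2, π/2] and φ(−π/2) + b₁·φ(0) = 0, φ(π/2) − b₁·φ(0) = 0. (That is, the eigenvalue λ = (2k+1)i of NP(π/2, b₁,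 −b₁) has no associated vectors.) -/
/-!
Put `m = 2k + 1`, so that `λ² = -m²` and `cos (m ω)` vanishes at `ω = ±π/2`. If `φ` were
associated with `φ₀`, then the Wronskian `W(cos (m ·), φ)` would have derivative
`2λ cos (m ω) φ₀(ω)`, and the boundary conditions (with `b₂ = -b₁`) force it to take the same value
at `±π/2`; hence `∫ cos (m ω) φ₀(ω) dω = 0` over `[-π/2, π/2]`. Since the Wronskian
`W(sin (m ·), φ₀) = -m φ₀(0)` is constant, this integral equals `(π/2) φ₀(0)`, so `φ₀(0) = 0`.
The boundary condition at `π/2` then gives `φ₀(π/2) = 0`, and an eigenfunction vanishing at `0`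
and at `π/2` has both Wronskians zero, so it vanishes on the whole interval.
-/

open Real Set

theorem eq_of_hasDerivAt_zero_on_Icc {E : Type*} [NormedAddCommGroup E] [NormedSpace ℝ E]
    {f : ℝ → E} {s t x y : ℝ} (hf : ∀ z ∈ Icc s t, HasDerivAt f 0 z)
    (hx : x ∈ Icc s t) (hy : y ∈ Icc s t) : f x = f y := by
  have hconst := constant_of_has_deriv_right_zero
    (fun z hz => (hf z hz).continuousAt.continuousWithinAt)
    (fun z hz => (hf z (Ico_subset_Icc_self hz)).hasDerivWithinAt)
  rw [hconst x hx, hconst y hy]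

theorem Complex.ne_zero_of_cos_eq_zero {z : ℂ} (h : Complex.cos z = 0) : z ≠ 0 := by
  rintro rfl
  simp at h

theorem hasDerivAt_cos_mul_ofReal (m : ℂ) (x : ℝ) :
    HasDerivAt (fun ω : ℝ => Complex.cos (m * ω)) (-(m * Complex.sin (m * x))) x := by
  simpa [mul_comm] using (((hasDerivAt_id (x : ℂ)).const_mul m).ccos).comp_ofReal

theorem hasDerivAt_sin_mul_ofReal (m : ℂ) (x : ℝ) :
    HasDerivAt (fun ω : ℝ => Complex.sin (m * ω)) (m * Complex.cos (m * x)) x := by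
  simpa [mul_comm] using (((hasDerivAt_id (x : ℂ)).const_mul m).csin).comp_ofReal

noncomputable def cosWronskian (m : ℂ) (u : ℝ → ℂ) (ω : ℝ) : ℂ :=
  Complex.cos (m * ω) * deriv u ω + m * Complex.sin (m * ω) * u ω

noncomputable def sinWronskian (m : ℂ) (u : ℝ → ℂ) (ω : ℝ) : ℂ :=
  Complex.sin (m * ω) * deriv u ω - m * Complex.cos (m * ω) * u ω

section Wronskian

variable {m : ℂ} {u v : ℝ → ℂ}

theorem sinWronskian_zero : sinWronskian m u 0 = -(m * u 0) := by
  simp [sinWronskian]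

theorem cosWronskian_of_cos_eq_zero {x : ℝ} (h : Complex.cos (m * x) = 0) :
    cosWronskian m u x = m * Complex.sin (m * x) * u x := by
  simp [cosWronskian, h]

theorem mul_eq_sin_mul_cosWronskian_sub_cos_mul_sinWronskian (x : ℝ) :
    m * u x = Complex.sin (m * x) * cosWronskian m u x
      - Complex.cos (m * x) * sinWronskian m u x := by
  unfold cosWronskian sinWronskian
  linear_combination m * u x * (Complex.sin_sq_add_cos_sq (m * x)).symm

theorem hasDerivAt_cosWronskian (hu : Differentiable ℝ u) (hu' : Differentiable ℝ (deriv u))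
    (x : ℝ) :
    HasDerivAt (cosWronskian m u)
      (Complex.cos (m * x) * (deriv (deriv u) x + m ^ 2 * u x)) x := by
  have h := ((hasDerivAt_cos_mul_ofReal m x).mul (hu' x).hasDerivAt).add
    (((hasDerivAt_sin_mul_ofReal m x).const_mul m).mul (hu x).hasDerivAt)
  exact h.congr_deriv (by ring)

theorem hasDerivAt_sinWronskian (hu : Differentiable ℝ u) (hu' : Differentiable ℝ (deriv u))
    (x : ℝ) :
    HasDerivAt (sinWronskian m u)
      (Complex.sin (m * x) * (deriv (deriv u) x + m ^ 2 * u x)) x := by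
  have h := ((hasDerivAt_sin_mul_ofReal m x).mul (hu' x).hasDerivAt).sub
    (((hasDerivAt_cos_mul_ofReal m x).const_mul m).mul (hu x).hasDerivAt)
  exact h.congr_deriv (by ring)

theorem cosWronskian_eq_of_forall_mem_Icc {s t x y : ℝ} (hu : Differentiable ℝ u)
    (hu' : Differentiable ℝ (deriv u))
    (hu_eq : ∀ z ∈ Icc s t, deriv (deriv u) z + m ^ 2 * u z = 0)
    (hx : x ∈ Icc s t) (hy : y ∈ Icc s t) : cosWronskian m u x = cosWronskian m u y :=
  eq_of_hasDerivAt_zero_on_Icc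
    (fun z hz => by simpa [hu_eq z hz] using hasDerivAt_cosWronskian (m := m) hu hu' z) hx hy

theorem sinWronskian_eq_of_forall_mem_Icc {s t x y : ℝ} (hu : Differentiable ℝ u)
    (hu' : Differentiable ℝ (deriv u))
    (hu_eq : ∀ z ∈ Icc s t, deriv (deriv u) z + m ^ 2 * u z = 0)
    (hx : x ∈ Icc s t) (hy : y ∈ Icc s t) : sinWronskian m u x = sinWronskian m u y :=
  eq_of_hasDerivAt_zero_on_Icc
    (fun z hz => by simpa [hu_eq z hz] using hasDerivAt_sinWronskian (m := m) hu hu' z) hx hy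

/-- `sin (m ω) u ω - ω * sinWronskian m u ω` is an antiderivative of `2m cos (m ω) u ω`, because
`sinWronskian m u` is stationary where `u'' + m² u = 0`. -/
theorem hasDerivAt_two_mul_cosWronskian_sub (hu : Differentiable ℝ u)
    (hu' : Differentiable ℝ (deriv u)) (hv : Differentiable ℝ v)
    (hv' : Differentiable ℝ (deriv v)) (c : ℂ) {x : ℝ}
    (hu_eq : deriv (deriv u) x + m ^ 2 * u x = 0)
    (hv_eq : deriv (deriv v) x + m ^ 2 * v x = c * u x) :
    HasDerivAt (fun ω : ℝ => 2 * m * cosWronskian m v ω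
      - c * (Complex.sin (m * ω) * u ω - ω * sinWronskian m u ω)) 0 x := by
  have hid : HasDerivAt (fun ω : ℝ => (ω : ℂ)) 1 x := by
    simpa using (hasDerivAt_id x).ofReal_comp
  have h := ((hasDerivAt_cosWronskian (m := m) hv hv' x).const_mul (2 * m)).sub
    ((((hasDerivAt_sin_mul_ofReal m x).mul (hu x).hasDerivAt).sub
      (hid.mul (hasDerivAt_sinWronskian (m := m) hu hu' x))).const_mul c)
  refine h.congr_deriv ?_
  rw [hu_eq, hv_eq, sinWronskian]
  ring

end Wronskian

section SymmetricInterval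

variable {m : ℂ} {a : ℝ} {u v : ℝ → ℂ}

theorem apply_zero_eq_zero_of_associated (ha : 0 ≤ a) (hm : Complex.cos (m * a) = 0)
    {c : ℂ} (hc : c ≠ 0) (hu : Differentiable ℝ u) (hu' : Differentiable ℝ (deriv u))
    (hv : Differentiable ℝ v) (hv' : Differentiable ℝ (deriv v))
    (hu_eq : ∀ x ∈ Icc (-a) a, deriv (deriv u) x + m ^ 2 * u x = 0)
    (hv_eq : ∀ x ∈ Icc (-a) a, deriv (deriv v) x + m ^ 2 * v x = c * u x)
    (hu_bd : u (-a) + u a = 0) (hv_bd : v (-a) + v a = 0) : u 0 = 0 := by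
  have hma := Complex.ne_zero_of_cos_eq_zero hm
  have hleft : -a ∈ Icc (-a) a := left_mem_Icc.2 (by linarith)
  have hright : a ∈ Icc (-a) a := right_mem_Icc.2 (by linarith)
  have hzero : (0 : ℝ) ∈ Icc (-a) a := ⟨by linarith, ha⟩
  have hcos_neg : Complex.cos (m * ((-a : ℝ) : ℂ)) = 0 := by
    rwa [Complex.ofReal_neg, mul_neg, Complex.cos_neg]
  have hW_left := sinWronskian_eq_of_forall_mem_Icc hu hu' hu_eq hleft hzero
  have hW_right := sinWronskian_eq_of_forall_mem_Icc hu hu' hu_eq hright hzero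
  have hH := eq_of_hasDerivAt_zero_on_Icc
    (fun x hx => hasDerivAt_two_mul_cosWronskian_sub hu hu' hv hv' c (hu_eq x hx) (hv_eq x hx))
    hleft hright
  simp only [cosWronskian_of_cos_eq_zero hm, cosWronskian_of_cos_eq_zero hcos_neg,
    hW_left, hW_right, sinWronskian_zero, Complex.ofReal_neg, mul_neg, Complex.sin_neg] at hH
  have hkey : 2 * c * m * a * u 0 = 0 := by
    linear_combination hH + 2 * m ^ 2 * Complex.sin (m * a) * hv_bd
      - c * Complex.sin (m * a) * hu_bd
  simpa [hc, left_ne_zero_of_mul hma, right_ne_zero_of_mul hma] using hkey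

theorem eqOn_zero_of_apply_zero_and_apply_eq_zero (ha : 0 ≤ a) (hm : Complex.cos (m * a) = 0)
    (hu : Differentiable ℝ u) (hu' : Differentiable ℝ (deriv u))
    (hu_eq : ∀ x ∈ Icc (-a) a, deriv (deriv u) x + m ^ 2 * u x = 0)
    (h0 : u 0 = 0) (ha_zero : u a = 0) : EqOn u 0 (Icc (-a) a) := by
  intro x hx
  have hcos : cosWronskian m u x = 0 := by
    rw [cosWronskian_eq_of_forall_mem_Icc hu hu' hu_eq hx (right_mem_Icc.2 (by linarith)),
      cosWronskian_of_cos_eq_zero hm, ha_zero, mul_zero]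
  have hsin : sinWronskian m u x = 0 := by
    rw [sinWronskian_eq_of_forall_mem_Icc hu hu' hu_eq hx ⟨by linarith, ha⟩, sinWronskian_zero,
      h0, mul_zero, neg_zero]
  have hmu := mul_eq_sin_mul_cosWronskian_sub_cos_mul_sinWronskian (m := m) (u := u) x
  rw [hcos, hsin, mul_zero, mul_zero, sub_zero] at hmu
  exact (mul_eq_zero.1 hmu).resolve_left (left_ne_zero_of_mul (Complex.ne_zero_of_cos_eq_zero hm))

end SymmetricInterval

theorem no_associated_vector_odd_case (b₁ : ℝ) (k : ℤ) :
    ∀ φ₀ : ℝ → ℂ,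
      Differentiable ℝ φ₀ → Differentiable ℝ (deriv φ₀) →
      (∃ ω ∈ Icc (-(π / 2)) (π / 2), φ₀ ω ≠ 0) →
      (∀ ω ∈ Icc (-(π / 2)) (π / 2),
        deriv (deriv φ₀) ω = ((2 * (k : ℂ) + 1) * Complex.I) ^ 2 * φ₀ ω) →
      φ₀ (-(π / 2)) + (b₁ : ℂ) * φ₀ 0 = 0 →
      φ₀ (π / 2) - (b₁ : ℂ) * φ₀ 0 = 0 →
      ¬ ∃ φ : ℝ → ℂ,
          Differentiable ℝ φ ∧ Differentiable ℝ (deriv φ) ∧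
          (∀ ω ∈ Icc (-(π / 2)) (π / 2),
            deriv (deriv φ) ω - ((2 * (k : ℂ) + 1) * Complex.I) ^ 2 * φ ω
              = 2 * ((2 * (k : ℂ) + 1) * Complex.I) * φ₀ ω) ∧
          φ (-(π / 2)) + (b₁ : ℂ) * φ 0 = 0 ∧
          φ (π / 2) - (b₁ : ℂ) * φ 0 = 0 := by
  intro φ₀ hφ₀ hφ₀' ⟨ω, hω, hφ₀ω⟩ hφ₀_eq hφ₀_left hφ₀_right
    ⟨φ, hφ, hφ', hφ_eq, hφ_left, hφ_right⟩
  set m : ℂ := 2 * (k : ℂ) + 1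
  have hm : Complex.cos (m * ((π / 2 : ℝ) : ℂ)) = 0 :=
    Complex.cos_eq_zero_iff.2 ⟨k, by push_cast; ring⟩
  have hm_ne : m ≠ 0 := left_ne_zero_of_mul (Complex.ne_zero_of_cos_eq_zero hm)
  have hmI_sq : (m * Complex.I) ^ 2 = -m ^ 2 := by
    rw [mul_pow, Complex.I_sq, mul_neg_one]
  have hφ₀_eq' : ∀ x ∈ Icc (-(π / 2)) (π / 2), deriv (deriv φ₀) x + m ^ 2 * φ₀ x = 0 :=
    fun x hx => by rw [hφ₀_eq x hx, hmI_sq]; ring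
  have hφ_eq' : ∀ x ∈ Icc (-(π / 2)) (π / 2),
      deriv (deriv φ) x + m ^ 2 * φ x = 2 * (m * Complex.I) * φ₀ x :=
    fun x hx => by linear_combination hφ_eq x hx + φ x * hmI_sq
  have h0 : φ₀ 0 = 0 := apply_zero_eq_zero_of_associated (by positivity) hm
    (by simp [hm_ne]) hφ₀ hφ₀' hφ hφ' hφ₀_eq' hφ_eq'
    (by linear_combination hφ₀_left + hφ₀_right) (by linear_combination hφ_left + hφ_right)
  exact hφ₀ω (eqOn_zero_of_apply_zero_and_apply_eq_zero (by positivity) hm hφ₀ hφ₀' hφ₀_eq' h0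
    (by linear_combination hφ₀_right + (b₁ : ℂ) * h0) hω)
end

section
/- Let l ≥ 2 be an even integer and let b ∈ ℝ. In ℝ^{l+2}, with standard basis vectors e₁, …, e_{l+2}, the l + 1 vectors e₁ + b·e_{l+2} and e_{j+1} + e_{j+3} for j = 0, 1, …, l − 1 are linearly independent. -/
/-!
Read a vector of `ℝ^{l+2}` as the coefficients of a polynomial of degree `≤ l + 1`. The Laplacian
vectors `e_j + e_{j+2}` become `X^j (1 + X²)`: they are unitriangular, hence independent, and all
vanish at `X = I`. The boundary vector `1 + b X^{l+1}` does not, because for even `l` its value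
`1 ± b I` has real part `1`.
-/

/-- The family of `l + 1` vectors `e₁ + b·e_{l+2}` and `e_{j+1} + e_{j+3}` (`j = 0, …, l−1`)
in `ℝ^{l+2}` (standard basis indexed from `0`). -/
def vecFamily (l : ℕ) (b : ℝ) : Fin (l + 1) → (Fin (l + 2) → ℝ) := fun j =>
  if (j : ℕ) = 0 then
    (Pi.single (0 : Fin (l + 2)) (1 : ℝ) : Fin (l + 2) → ℝ)
      + b • (Pi.single (Fin.last (l + 1)) (1 : ℝ) : Fin (l + 2) → ℝ)
  else
    (Pi.single (⟨(j : ℕ) - 1, by have := j.isLt; omega⟩ : Fin (l + 2)) (1 : ℝ) : Fin (l + 2) → ℝ)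
      + (Pi.single (⟨(j : ℕ) + 1, by have := j.isLt; omega⟩ : Fin (l + 2)) (1 : ℝ) : Fin (l + 2) → ℝ)

lemma linearIndependent_single_add_single_addNat_two (R : Type*) [Ring R] (n : ℕ) :
    LinearIndependent R fun j : Fin n =>
      (Pi.single (Fin.castAdd 2 j) 1 + Pi.single (j.addNat 2) 1 : Fin (n + 2) → R) := by
  rw [Fintype.linearIndependent_iff]
  intro g hg i
  induction i using WellFoundedLT.induction with
  | _ i ih =>
    -- coordinate `i` of the combination only sees `g i` and `g (i - 2)`
    have hcoord : ∀ j : Fin n,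
        (g j • (Pi.single (Fin.castAdd 2 j) 1 + Pi.single (j.addNat 2) 1 : Fin (n + 2) → R))
          (Fin.castAdd 2 i) = if j = i then g i else 0 := by
      intro j
      by_cases hji : j = i
      · subst hji
        simp [Fin.ext_iff]
      · by_cases hlt : j < i
        · simp [ih j hlt, hji]
        · have : (j : ℕ) + 2 ≠ i := by simp only [not_lt, Fin.le_def] at hlt; omega
          simp [Fin.ext_iff, hji, this, Ne.symm (Fin.val_ne_of_ne hji)]
    have hi := congrFun hg (Fin.castAdd 2 i)
    rw [Finset.sum_apply] at hi
    simpa only [hcoord, Finset.sum_ite_eq', Finset.mem_univ, if_true, Pi.zero_apply] using hi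

noncomputable def evalAtI (m : ℕ) : (Fin m → ℝ) →ₗ[ℝ] ℂ :=
  Fintype.linearCombination ℝ fun i => Complex.I ^ (i : ℕ)

lemma evalAtI_single (m : ℕ) (i : Fin m) : evalAtI m (Pi.single i 1) = Complex.I ^ (i : ℕ) := by
  simp [evalAtI, Fintype.linearCombination_apply_single]

lemma evalAtI_single_add_single_addNat_two (n : ℕ) (j : Fin n) :
    evalAtI (n + 2) (Pi.single (Fin.castAdd 2 j) 1 + Pi.single (j.addNat 2) 1) = 0 := by
  simp [evalAtI_single, pow_add]

lemma evalAtI_vecFamily_zero_ne_zero {l : ℕ} (hl : Even l) (b : ℝ) :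
    evalAtI (l + 2) (vecFamily l b 0) ≠ 0 := by
  obtain ⟨p, rfl⟩ := hl
  have hpow : Complex.I ^ (p + p + 1) = ((-1 : ℝ) ^ p : ℝ) * Complex.I := by
    rw [← two_mul, pow_succ, pow_mul, Complex.I_sq]; push_cast; ring
  intro h
  have hre := congrArg Complex.re h
  simp [vecFamily, evalAtI_single, hpow, -Complex.ofReal_pow] at hre

lemma tail_vecFamily (l : ℕ) (b : ℝ) :
    Fin.tail (vecFamily l b) =
      fun j => Pi.single (Fin.castAdd 2 j) 1 + Pi.single (j.addNat 2) 1 := by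
  funext j
  simp only [Fin.tail, vecFamily, Fin.val_succ, Nat.add_one_ne_zero, if_false]
  rfl

theorem linearIndependent_even_case_general (l : ℕ) (hle : Even l) (b : ℝ) :
    LinearIndependent ℝ (vecFamily l b) := by
  rw [linearIndependent_finSucc, tail_vecFamily]
  refine ⟨linearIndependent_single_add_single_addNat_two ℝ l, fun hmem => ?_⟩
  have hspan : Submodule.span ℝ (Set.range fun j : Fin l =>
      (Pi.single (Fin.castAdd 2 j) 1 + Pi.single (j.addNat 2) 1 : Fin (l + 2) → ℝ)) ≤
      LinearMap.ker (evalAtI (l + 2)) :=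
    Submodule.span_le.mpr <| Set.range_subset_iff.mpr (evalAtI_single_add_single_addNat_two l)
  exact evalAtI_vecFamily_zero_ne_zero hle b (hspan hmem)

theorem linearIndependent_even_case (l : ℕ) (hl : 2 ≤ l) (hle : Even l) (b : ℝ) :
    LinearIndependent ℝ (vecFamily l b) :=
  linearIndependent_even_case_general l hle b
end

section
/- Let l ≥ 1 be an odd integer and b ∈ ℝ. In ℝ^{l+2}, with standard basis vectors e₁, …, e_{l+2}, the l + 1 vectors e₁ + b·e_{l+2} and e_{j+1} + e_{j+3} for j = 0, 1, …, l − 1 are linearly independent if and only if b ≠ (−1)^{(l−1)/2}. -/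
/-!
Write `l = 2m + 1` and `w_i = e_i + e_{i+2}` (`i < l`, indices from `0`) for the last `l` vectors.
Their coordinates `2, …, l + 1` form a unitriangular matrix, so they are independent, and the
family is independent iff `v = e_0 + b e_{l+1}` lies outside their span. The functional
`x ↦ ∑_k (-1)^k x_{2k}` kills every `w_i` and takes the value `1 - b (-1)^m` at `v`; conversely,
for `b = (-1)^m` the sum `∑_{i ≤ m} (-1)^i w_{2i}` telescopes to `v`.
-/

open Matrix Submodule Set

theorem notMem_span_range_of_map_eq_zero {R M N ι : Type*} [Semiring R] [AddCommMonoid M]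
    [Module R M] [AddCommMonoid N] [Module R N] {v : ι → M} {x : M} (φ : M →ₗ[R] N)
    (hv : ∀ i, φ (v i) = 0) (hx : φ x ≠ 0) : x ∉ span R (range v) :=
  fun h => hx (span_le (p := LinearMap.ker φ) |>.mpr (range_subset_iff.mpr hv) h)

section Laplacian

variable (R : Type*) [CommRing R]

def laplacianVec (l : ℕ) (i : Fin l) : Fin (l + 2) → R :=
  Pi.single i.castSucc.castSucc 1 + Pi.single i.succ.succ 1

theorem linearIndependent_laplacianVec [IsDomain R] (l : ℕ) :
    LinearIndependent R (laplacianVec R l) := by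
  set M : Matrix (Fin l) (Fin l) R := .of fun i k => laplacianVec R l i k.succ.succ
  have hM : M.IsLowerTriangular := by
    intro i k hik
    have hik : (i : ℕ) < k := OrderDual.toDual_lt_toDual.mp hik
    simp only [M, laplacianVec, of_apply, Pi.add_apply, Pi.single_apply, Fin.ext_iff,
      Fin.val_succ, Fin.val_castSucc]
    rw [if_neg (by omega), if_neg (by omega), add_zero]
  have hdet : M.det = 1 := by
    rw [det_of_isLowerTriangular M hM]
    simp [M, laplacianVec, Pi.single_apply, Fin.ext_iff, show ∀ n : ℕ, n + 1 + 1 ≠ n by omega]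
  have hrows := linearIndependent_rows_of_det_ne_zero (A := M) (by simp [hdet])
  exact .of_comp (LinearMap.funLeft R R fun k : Fin l => k.succ.succ) hrows

def altEven (n : ℕ) : R := if Even n then (-1) ^ (n / 2) else 0

variable {R}

theorem altEven_add_two (n : ℕ) : altEven R (n + 2) = -altEven R n := by
  simp only [altEven, Nat.even_add, even_two, iff_true, Nat.add_div_right _ two_pos, pow_succ]
  split_ifs <;> simp

theorem altEven_dotProduct_laplacianVec {l : ℕ} (i : Fin l) :
    (fun k : Fin (l + 2) => altEven R k) ⬝ᵥ laplacianVec R l i = 0 := by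
  simp [laplacianVec, dotProduct_add, dotProduct_single, altEven_add_two]

theorem single_zero_sub_mem_span_laplacianVec {l n : ℕ} (hn : 2 * n < l + 2) :
    Pi.single 0 1 - (-1 : R) ^ n • Pi.single ⟨2 * n, hn⟩ 1 ∈
      span R (range (laplacianVec R l)) := by
  induction n with
  | zero => simp
  | succ n ih =>
    have hw := subset_span (R := R) (mem_range_self (f := laplacianVec R l) ⟨2 * n, by omega⟩)
    have hsucc : (⟨2 * n, by omega⟩ : Fin l).succ.succ = ⟨2 * (n + 1), hn⟩ :=
      Fin.ext (by simp only [Fin.succ_mk]; ring)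
    convert add_mem (ih (by omega)) (smul_mem _ ((-1 : R) ^ n) hw) using 1
    rw [laplacianVec, hsucc, Fin.castSucc_mk, Fin.castSucc_mk]
    module

end Laplacian

theorem vecFamily_zero (l : ℕ) (b : ℝ) :
    vecFamily l b 0 = Pi.single 0 1 + b • Pi.single (Fin.last (l + 1)) 1 := rfl

theorem tail_vecFamily_s12 (l : ℕ) (b : ℝ) : Fin.tail (vecFamily l b) = laplacianVec ℝ l := by
  funext i
  simp only [Fin.tail, vecFamily, Fin.val_succ, Nat.add_one_ne_zero, ite_false]
  rfl

theorem last_eq_two_mul (m : ℕ) : Fin.last (2 * m + 2) = ⟨2 * (m + 1), by omega⟩ :=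
  Fin.ext (by simp only [Fin.val_last]; ring)

theorem altEven_dotProduct_vecFamily_zero (m : ℕ) (b : ℝ) :
    (fun k : Fin (2 * m + 3) => altEven ℝ k) ⬝ᵥ vecFamily (2 * m + 1) b 0 =
      1 - b * (-1) ^ m := by
  simp [vecFamily_zero, dotProduct_add, dotProduct_single, last_eq_two_mul, altEven, pow_succ,
    sub_eq_add_neg]

theorem vecFamily_zero_mem_span_iff (m : ℕ) (b : ℝ) :
    vecFamily (2 * m + 1) b 0 ∈ span ℝ (range (laplacianVec ℝ (2 * m + 1))) ↔
      b = (-1) ^ m := by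
  constructor
  · contrapose!
    intro hb
    refine notMem_span_range_of_map_eq_zero (dotProductEquiv ℝ _ fun k => altEven ℝ k)
      (by simpa using altEven_dotProduct_laplacianVec) ?_
    rw [dotProductEquiv_apply_apply, altEven_dotProduct_vecFamily_zero]
    have hsq : ((-1 : ℝ) ^ m) ^ 2 = 1 := by rw [← pow_mul, pow_mul', neg_one_sq, one_pow]
    intro h
    apply hb
    linear_combination (-(-1 : ℝ) ^ m) * h - b * hsq
  · rintro rfl
    convert single_zero_sub_mem_span_laplacianVec (R := ℝ) (l := 2 * m + 1) (n := m + 1)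
      (by omega) using 1
    rw [vecFamily_zero, last_eq_two_mul]
    module

theorem linearIndependent_odd_case_iff_general (l : ℕ) (hlo : Odd l) (b : ℝ) :
    LinearIndependent ℝ (vecFamily l b) ↔ b ≠ (-1 : ℝ) ^ ((l - 1) / 2) := by
  obtain ⟨m, rfl⟩ := hlo
  rw [linearIndependent_finSucc, tail_vecFamily_s12, vecFamily_zero_mem_span_iff,
    show (2 * m + 1 - 1) / 2 = m by omega]
  simp [linearIndependent_laplacianVec]

theorem linearIndependent_odd_case_iff (l : ℕ) (hl : 1 ≤ l) (hlo : Odd l) (b : ℝ) :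
    LinearIndependent ℝ (vecFamily l b) ↔ b ≠ (-1 : ℝ) ^ ((l - 1) / 2) :=
  linearIndependent_odd_case_iff_general l hlo b
end

section
/- Let b₁, b₂ ∈ ℝ and λ ∈ ℂ with λ ≠ 0. Then λ is an eigenvalue of the nonlocal system NS(b₁, b₂) if and only if sinh(λπ)² = b₁·b₂·sinh(λπ/2)², equivalently sinh(λπ/2)² · (4·cosh(λπ/2)² − b₁·b₂) = 0. -/
/-!
On `[-π/2, π/2]` a solution of `φ'' = λ²φ` with `φ(-π/2) = 0` satisfies
`λ φ(ω) = φ'(-π/2) sinh (λ (ω + π/2))`: its Wronskians with `sinh (λ (ω + π/2))` and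
`cosh (λ (ω + π/2))` are constant, and `cosh² - sinh² = 1` recombines them. For `λ ≠ 0` the
eigenfunctions are therefore determined by the slopes `vⱼ = φⱼ'(-π/2)`, and the two nonlocal
conditions become the linear system with matrix
`[[sinh λπ, b₁ sinh (λπ/2)], [b₂ sinh (λπ/2), sinh λπ]]`, which has a nonzero solution iff its
determinant `sinh² λπ - b₁ b₂ sinh² (λπ/2)` vanishes. The second equivalence is
`sinh λπ = 2 sinh (λπ/2) cosh (λπ/2)`.
-/

open Real Set

/-- `lam` is an eigenvalue of the nonlocal system `NS(b₁, b₂)`. -/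
def NSEigen (b₁ b₂ : ℝ) (lam : ℂ) : Prop :=
  ∃ φ₁ φ₂ : ℝ → ℂ,
    Differentiable ℝ φ₁ ∧ Differentiable ℝ (deriv φ₁) ∧
    Differentiable ℝ φ₂ ∧ Differentiable ℝ (deriv φ₂) ∧
    ((∃ ω ∈ Icc (-(π / 2)) (π / 2), φ₁ ω ≠ 0) ∨ (∃ ω ∈ Icc (-(π / 2)) (π / 2), φ₂ ω ≠ 0)) ∧
    (∀ ω ∈ Icc (-(π / 2)) (π / 2), deriv (deriv φ₁) ω = lam ^ 2 * φ₁ ω) ∧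
    (∀ ω ∈ Icc (-(π / 2)) (π / 2), deriv (deriv φ₂) ω = lam ^ 2 * φ₂ ω) ∧
    φ₁ (-(π / 2)) = 0 ∧ φ₁ (π / 2) + (b₁ : ℂ) * φ₂ 0 = 0 ∧
    φ₂ (-(π / 2)) = 0 ∧ φ₂ (π / 2) + (b₂ : ℂ) * φ₁ 0 = 0

section ShiftedHyperbolic

variable (lam : ℂ) (a : ℝ)

theorem hasDerivAt_const_mul_sub (z : ℂ) : HasDerivAt (fun t : ℂ => lam * (t - a)) lam z := by
  simpa using ((hasDerivAt_id z).sub_const (a : ℂ)).const_mul lam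

theorem hasDerivAt_sinh_mul_sub (x : ℝ) :
    HasDerivAt (fun t : ℝ => Complex.sinh (lam * (t - a)))
      (lam * Complex.cosh (lam * (x - a))) x := by
  simpa [mul_comm] using (hasDerivAt_const_mul_sub lam a x).csinh.comp_ofReal

theorem hasDerivAt_cosh_mul_sub (x : ℝ) :
    HasDerivAt (fun t : ℝ => Complex.cosh (lam * (t - a)))
      (lam * Complex.sinh (lam * (x - a))) x := by
  simpa [mul_comm] using (hasDerivAt_const_mul_sub lam a x).ccosh.comp_ofReal

theorem deriv_const_mul_sinh_mul_sub (c : ℂ) :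
    deriv (fun t : ℝ => c * Complex.sinh (lam * (t - a)))
      = fun x : ℝ => c * lam * Complex.cosh (lam * (x - a)) := by
  funext x
  rw [((hasDerivAt_sinh_mul_sub lam a x).const_mul c).deriv, mul_assoc]

theorem deriv_deriv_const_mul_sinh_mul_sub (c : ℂ) (x : ℝ) :
    deriv (deriv fun t : ℝ => c * Complex.sinh (lam * (t - a))) x
      = lam ^ 2 * (c * Complex.sinh (lam * (x - a))) := by
  rw [deriv_const_mul_sinh_mul_sub, ((hasDerivAt_cosh_mul_sub lam a x).const_mul (c * lam)).deriv]
  ring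

theorem differentiable_const_mul_sinh_mul_sub (c : ℂ) :
    Differentiable ℝ fun t : ℝ => c * Complex.sinh (lam * (t - a)) :=
  fun x => ((hasDerivAt_sinh_mul_sub lam a x).const_mul c).differentiableAt

theorem differentiable_deriv_const_mul_sinh_mul_sub (c : ℂ) :
    Differentiable ℝ (deriv fun t : ℝ => c * Complex.sinh (lam * (t - a))) := by
  rw [deriv_const_mul_sinh_mul_sub]
  exact fun x => ((hasDerivAt_cosh_mul_sub lam a x).const_mul (c * lam)).differentiableAt

end ShiftedHyperbolic

theorem exists_sinh_mul_sub_ne_zero {lam : ℂ} (hlam : lam ≠ 0) {a b : ℝ} (hab : a < b) :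
    ∃ x ∈ Icc a b, Complex.sinh (lam * (x - a)) ≠ 0 := by
  by_contra! h
  -- otherwise the derivative `lam * cosh` would vanish at the midpoint, against `cosh² - sinh² = 1`
  have hm : (a + b) / 2 ∈ Ioo a b := ⟨by linarith, by linarith⟩
  have hcosh : lam * Complex.cosh (lam * (((a + b) / 2 : ℝ) - a)) = 0 := by
    rw [← (hasDerivAt_sinh_mul_sub lam a _).deriv,
      (Filter.eventuallyEq_of_mem (Icc_mem_nhds hm.1 hm.2) h).deriv_eq, deriv_const]
  have hpyth := Complex.cosh_sq_sub_sinh_sq (lam * (((a + b) / 2 : ℝ) - a))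
  rw [(mul_eq_zero.mp hcosh).resolve_left hlam, h _ (Ioo_subset_Icc_self hm)] at hpyth
  norm_num at hpyth

theorem wronskian_eq_of_hasDerivAt {u u' v v' : ℝ → ℂ} {lam : ℂ} {a b : ℝ}
    (hu : ∀ x ∈ Icc a b, HasDerivAt u (u' x) x)
    (hu' : ∀ x ∈ Icc a b, HasDerivAt u' (lam ^ 2 * u x) x)
    (hv : ∀ x ∈ Icc a b, HasDerivAt v (v' x) x)
    (hv' : ∀ x ∈ Icc a b, HasDerivAt v' (lam ^ 2 * v x) x) :
    ∀ x ∈ Icc a b, u' x * v x - u x * v' x = u' a * v a - u a * v' a := by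
  have hW : ∀ x ∈ Icc a b, HasDerivAt (fun t => u' t * v t - u t * v' t) 0 x := by
    intro x hx
    exact (((hu' x hx).mul (hv x hx)).sub ((hu x hx).mul (hv' x hx))).congr_deriv (by ring)
  exact constant_of_has_deriv_right_zero
    (fun x hx => (hW x hx).continuousAt.continuousWithinAt)
    (fun x hx => (hW x (Ico_subset_Icc_self hx)).hasDerivWithinAt)

theorem mul_eq_deriv_mul_sinh_of_deriv_deriv_eq {f : ℝ → ℂ} {lam : ℂ} {a b : ℝ}
    (hf : Differentiable ℝ f) (hf' : Differentiable ℝ (deriv f))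
    (hode : ∀ x ∈ Icc a b, deriv (deriv f) x = lam ^ 2 * f x) (ha : f a = 0) :
    ∀ x ∈ Icc a b, lam * f x = deriv f a * Complex.sinh (lam * (x - a)) := by
  have hf₁ : ∀ x ∈ Icc a b, HasDerivAt f (deriv f x) x := fun x _ => (hf x).hasDerivAt
  have hf₂ : ∀ x ∈ Icc a b, HasDerivAt (deriv f) (lam ^ 2 * f x) x :=
    fun x hx => hode x hx ▸ (hf' x).hasDerivAt
  have hsinh_deriv : ∀ x ∈ Icc a b, HasDerivAt (fun t : ℝ => lam * Complex.cosh (lam * (t - a)))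
      (lam ^ 2 * Complex.sinh (lam * (x - a))) x := fun x _ => by
    simpa [sq, mul_assoc] using (hasDerivAt_cosh_mul_sub lam a x).const_mul lam
  have hcosh_deriv : ∀ x ∈ Icc a b, HasDerivAt (fun t : ℝ => lam * Complex.sinh (lam * (t - a)))
      (lam ^ 2 * Complex.cosh (lam * (x - a))) x := fun x _ => by
    simpa [sq, mul_assoc] using (hasDerivAt_sinh_mul_sub lam a x).const_mul lam
  intro x hx
  have hWS := wronskian_eq_of_hasDerivAt hf₁ hf₂
    (fun x _ => hasDerivAt_sinh_mul_sub lam a x) hsinh_deriv x hx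
  have hWC := wronskian_eq_of_hasDerivAt hf₁ hf₂
    (fun x _ => hasDerivAt_cosh_mul_sub lam a x) hcosh_deriv x hx
  simp only [sub_self, mul_zero, Complex.sinh_zero, Complex.cosh_zero, ha] at hWS hWC
  linear_combination Complex.sinh (lam * (x - a)) * hWC - Complex.cosh (lam * (x - a)) * hWS
    - lam * f x * Complex.cosh_sq_sub_sinh_sq (lam * (x - a))

open scoped Matrix

noncomputable def nsBoundaryMatrix (b₁ b₂ : ℝ) (lam : ℂ) : Matrix (Fin 2) (Fin 2) ℂ :=
  !![Complex.sinh (lam * π), b₁ * Complex.sinh (lam * (π / 2 : ℝ));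
    b₂ * Complex.sinh (lam * (π / 2 : ℝ)), Complex.sinh (lam * π)]

theorem nsBoundaryMatrix_mulVec_eq_zero_iff {b₁ b₂ : ℝ} {lam : ℂ} {v : Fin 2 → ℂ} :
    nsBoundaryMatrix b₁ b₂ lam *ᵥ v = 0 ↔
      v 0 * Complex.sinh (lam * π) + b₁ * (v 1 * Complex.sinh (lam * (π / 2 : ℝ))) = 0 ∧
      v 1 * Complex.sinh (lam * π) + b₂ * (v 0 * Complex.sinh (lam * (π / 2 : ℝ))) = 0 := by
  simp only [funext_iff, Fin.forall_fin_two, nsBoundaryMatrix, Matrix.mulVec, dotProduct,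
    Fin.sum_univ_two, Matrix.of_apply, Matrix.cons_val_zero, Matrix.cons_val_one, Pi.zero_apply]
  ring_nf

theorem half_pi_sub_neg_half_pi : ((π / 2 : ℝ) : ℂ) - ((-(π / 2) : ℝ) : ℂ) = π := by
  push_cast; ring

theorem zero_sub_neg_half_pi : ((0 : ℝ) : ℂ) - ((-(π / 2) : ℝ) : ℂ) = ((π / 2 : ℝ) : ℂ) := by
  push_cast; ring

theorem NSEigen.exists_mulVec_eq_zero {b₁ b₂ : ℝ} {lam : ℂ} (hlam : lam ≠ 0)
    (h : NSEigen b₁ b₂ lam) : ∃ v ≠ 0, nsBoundaryMatrix b₁ b₂ lam *ᵥ v = 0 := by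
  obtain ⟨φ₁, φ₂, hφ₁, hφ₁', hφ₂, hφ₂', hne, hode₁, hode₂, hl₁, hr₁, hl₂, hr₂⟩ := h
  have hrep₁ := mul_eq_deriv_mul_sinh_of_deriv_deriv_eq hφ₁ hφ₁' hode₁ hl₁
  have hrep₂ := mul_eq_deriv_mul_sinh_of_deriv_deriv_eq hφ₂ hφ₂' hode₂ hl₂
  have hπ := pi_pos
  have h0 : (0 : ℝ) ∈ Icc (-(π / 2)) (π / 2) := ⟨by linarith, by linarith⟩
  have hR : π / 2 ∈ Icc (-(π / 2)) (π / 2) := ⟨by linarith, le_rfl⟩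
  have hR₁ := hrep₁ _ hR
  have hR₂ := hrep₂ _ hR
  have h0₁ := hrep₁ _ h0
  have h0₂ := hrep₂ _ h0
  rw [half_pi_sub_neg_half_pi] at hR₁ hR₂
  rw [zero_sub_neg_half_pi] at h0₁ h0₂
  refine ⟨![deriv φ₁ (-(π / 2)), deriv φ₂ (-(π / 2))], fun hv => ?_,
    nsBoundaryMatrix_mulVec_eq_zero_iff.mpr ⟨?_, ?_⟩⟩
  · have hc₁ : deriv φ₁ (-(π / 2)) = 0 := congr_fun hv 0
    have hc₂ : deriv φ₂ (-(π / 2)) = 0 := congr_fun hv 1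
    rcases hne with ⟨x, hx, hφx⟩ | ⟨x, hx, hφx⟩
    · exact hφx ((mul_eq_zero.mp (by simpa [hc₁] using hrep₁ x hx)).resolve_left hlam)
    · exact hφx ((mul_eq_zero.mp (by simpa [hc₂] using hrep₂ x hx)).resolve_left hlam)
  · simp only [Matrix.cons_val_zero, Matrix.cons_val_one]
    linear_combination lam * hr₁ - hR₁ - b₁ * h0₂
  · simp only [Matrix.cons_val_zero, Matrix.cons_val_one]
    linear_combination lam * hr₂ - hR₂ - b₂ * h0₁

theorem nsEigen_of_mulVec_eq_zero {b₁ b₂ : ℝ} {lam : ℂ} (hlam : lam ≠ 0) {v : Fin 2 → ℂ}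
    (hv : v ≠ 0) (hMv : nsBoundaryMatrix b₁ b₂ lam *ᵥ v = 0) : NSEigen b₁ b₂ lam := by
  have hπ := pi_pos
  obtain ⟨x, hx, hsinh⟩ := exists_sinh_mul_sub_ne_zero hlam (show -(π / 2) < π / 2 by linarith)
  obtain ⟨hM₀, hM₁⟩ := nsBoundaryMatrix_mulVec_eq_zero_iff.mp hMv
  refine ⟨fun t => v 0 * Complex.sinh (lam * (t - (-(π / 2) : ℝ))),
    fun t => v 1 * Complex.sinh (lam * (t - (-(π / 2) : ℝ))),
    differentiable_const_mul_sinh_mul_sub _ _ _, differentiable_deriv_const_mul_sinh_mul_sub _ _ _,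
    differentiable_const_mul_sinh_mul_sub _ _ _, differentiable_deriv_const_mul_sinh_mul_sub _ _ _,
    ?_, fun x _ => deriv_deriv_const_mul_sinh_mul_sub _ _ _ x,
    fun x _ => deriv_deriv_const_mul_sinh_mul_sub _ _ _ x, by simp, ?_, by simp, ?_⟩
  · by_cases hv₀ : v 0 = 0
    · have hv₁ : v 1 ≠ 0 := fun hv₁ => hv (by ext i; fin_cases i <;> assumption)
      exact Or.inr ⟨x, hx, mul_ne_zero hv₁ hsinh⟩
    · exact Or.inl ⟨x, hx, mul_ne_zero hv₀ hsinh⟩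
  · simp only [half_pi_sub_neg_half_pi, zero_sub_neg_half_pi]
    linear_combination hM₀
  · simp only [half_pi_sub_neg_half_pi, zero_sub_neg_half_pi]
    linear_combination hM₁

theorem nsEigen_iff_det_eq_zero {b₁ b₂ : ℝ} {lam : ℂ} (hlam : lam ≠ 0) :
    NSEigen b₁ b₂ lam ↔ (nsBoundaryMatrix b₁ b₂ lam).det = 0 := by
  rw [← Matrix.exists_mulVec_eq_zero_iff]
  exact ⟨NSEigen.exists_mulVec_eq_zero hlam,
    fun ⟨_, hv, hMv⟩ => nsEigen_of_mulVec_eq_zero hlam hv hMv⟩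

theorem system_nonzero_eigenvalue_iff (b₁ b₂ : ℝ) (lam : ℂ) (hlam : lam ≠ 0) :
    (NSEigen b₁ b₂ lam ↔
      Complex.sinh (lam * (π : ℂ)) ^ 2
        = (b₁ : ℂ) * (b₂ : ℂ) * Complex.sinh (lam * ((π : ℝ) / 2 : ℝ)) ^ 2) ∧
    (Complex.sinh (lam * (π : ℂ)) ^ 2
        = (b₁ : ℂ) * (b₂ : ℂ) * Complex.sinh (lam * ((π : ℝ) / 2 : ℝ)) ^ 2 ↔
      Complex.sinh (lam * ((π : ℝ) / 2 : ℝ)) ^ 2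
        * (4 * Complex.cosh (lam * ((π : ℝ) / 2 : ℝ)) ^ 2 - (b₁ : ℂ) * (b₂ : ℂ)) = 0) := by
  have hdouble : Complex.sinh (lam * π)
      = 2 * Complex.sinh (lam * (π / 2 : ℝ)) * Complex.cosh (lam * (π / 2 : ℝ)) := by
    rw [← Complex.sinh_two_mul]
    congr 1
    push_cast
    ring
  constructor
  · rw [nsEigen_iff_det_eq_zero hlam, nsBoundaryMatrix, Matrix.det_fin_two_of]
    constructor <;> intro h <;> linear_combination h
  · rw [hdouble]
    constructor <;> intro h <;> linear_combination h
end

section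
/- Let b₁, b₂ ∈ ℝ. Then λ = 0 is an eigenvalue of the nonlocal system NS(b₁, b₂) (i.e., there exist twice differentiable φ₁, φ₂ : ℝ → ℂ, not both identically zero on [−π/2, π/2], with φⱼ''(ω) = 0 on [−π/2, π/2] and φ₁(−π/2) = 0, φ₁(π/2) + b₁·φ₂(0) = 0, φ₂(−π/2) = 0, φ₂(π/2) + b₂·φ₁(0) = 0) if and only if b₁·b₂ = 4. -/
open Real Set

/-! For `λ = 0` each `φⱼ` is affine, and the condition at `-π/2` forces `φⱼ ω = (ω + π/2) cⱼ`.
Dividing the two nonlocal conditions by `π/2` they become the linear system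
`2 c₁ + b₁ c₂ = 0`, `b₂ c₁ + 2 c₂ = 0`, which has a nonzero solution exactly when its
determinant `4 - b₁ b₂` vanishes. -/

open Matrix

theorem eq_affine_of_deriv_deriv_eq_zero {E : Type*} [NormedAddCommGroup E] [NormedSpace ℝ E]
    {φ : ℝ → E} {a b : ℝ} (hφ : Differentiable ℝ φ) (hφ' : Differentiable ℝ (deriv φ))
    (h : ∀ x ∈ Icc a b, deriv (deriv φ) x = 0) :
    ∀ x ∈ Icc a b, φ x = φ a + (x - a) • deriv φ a := by
  have hslope : ∀ x ∈ Icc a b, deriv φ x = deriv φ a :=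
    constant_of_has_deriv_right_zero hφ'.continuous.continuousOn fun x hx =>
      h x (Ico_subset_Icc_self hx) ▸ (hφ' x).hasDerivAt.hasDerivWithinAt
  refine eq_of_has_deriv_right_eq (f' := deriv φ) (fun x _ => (hφ x).hasDerivAt.hasDerivWithinAt)
    (fun x hx => ?_) hφ.continuous.continuousOn (by fun_prop) (by simp)
  rw [hslope x (Ico_subset_Icc_self hx)]
  simpa using ((((hasDerivAt_id x).sub_const a).smul_const (deriv φ a)).const_add
    (φ a)).hasDerivWithinAt

theorem exists_mulVec_eq_zero_of_nsEigen_zero {b₁ b₂ : ℝ} (h : NSEigen b₁ b₂ 0) :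
    ∃ c : Fin 2 → ℂ, c ≠ 0 ∧ !![2, (b₁ : ℂ); b₂, 2] *ᵥ c = 0 := by
  obtain ⟨φ₁, φ₂, hφ₁, hφ₁', hφ₂, hφ₂', hne, hode₁, hode₂, hl₁, hr₁, hl₂, hr₂⟩ := h
  have line : ∀ φ : ℝ → ℂ, Differentiable ℝ φ → Differentiable ℝ (deriv φ) →
      (∀ ω ∈ Icc (-(π / 2)) (π / 2), deriv (deriv φ) ω = 0 ^ 2 * φ ω) → φ (-(π / 2)) = 0 →
      ∀ ω ∈ Icc (-(π / 2)) (π / 2), φ ω = (ω + π / 2) • deriv φ (-(π / 2)) := by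
    intro φ hφ hφ' hode hl ω hω
    simpa [hl] using eq_affine_of_deriv_deriv_eq_zero hφ hφ' (by simpa using hode) ω hω
  have line₁ := line φ₁ hφ₁ hφ₁' hode₁ hl₁
  have line₂ := line φ₂ hφ₂ hφ₂' hode₂ hl₂
  refine ⟨![deriv φ₁ (-(π / 2)), deriv φ₂ (-(π / 2))], fun hc => ?_, ?_⟩
  · rcases hne with ⟨ω, hω, hne⟩ | ⟨ω, hω, hne⟩
    · exact hne (by rw [line₁ ω hω, show deriv φ₁ (-(π / 2)) = 0 from congrFun hc 0, smul_zero])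
    · exact hne (by rw [line₂ ω hω, show deriv φ₂ (-(π / 2)) = 0 from congrFun hc 1, smul_zero])
  have hπ : (π : ℂ) ≠ 0 := by exact_mod_cast pi_ne_zero
  have mem_zero : (0 : ℝ) ∈ Icc (-(π / 2)) (π / 2) := by constructor <;> linarith [pi_pos]
  have mem_right : π / 2 ∈ Icc (-(π / 2)) (π / 2) := by constructor <;> linarith [pi_pos]
  rw [line₁ _ mem_right, line₂ _ mem_zero] at hr₁
  rw [line₂ _ mem_right, line₁ _ mem_zero] at hr₂
  simp only [Complex.real_smul] at hr₁ hr₂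
  push_cast at hr₁ hr₂
  have e₁ : 2 * deriv φ₁ (-(π / 2)) + b₁ * deriv φ₂ (-(π / 2)) = 0 :=
    mul_left_cancel₀ hπ (by linear_combination 2 * hr₁)
  have e₂ : b₂ * deriv φ₁ (-(π / 2)) + 2 * deriv φ₂ (-(π / 2)) = 0 :=
    mul_left_cancel₀ hπ (by linear_combination 2 * hr₂)
  rw [mulVec_fin_two]
  simp [e₁, e₂]

theorem nsEigen_zero_of_mulVec_eq_zero {b₁ b₂ : ℝ} {c : Fin 2 → ℂ} (hc : c ≠ 0)
    (h : !![2, (b₁ : ℂ); b₂, 2] *ᵥ c = 0) : NSEigen b₁ b₂ 0 := by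
  have hline : ∀ (z : ℂ) (x : ℝ), HasDerivAt (fun ω : ℝ => (ω + π / 2) • z) z x := fun z x => by
    simpa using ((hasDerivAt_id x).add_const (π / 2)).smul_const z
  have hderiv : ∀ z : ℂ, deriv (fun ω : ℝ => (ω + π / 2) • z) = fun _ => z :=
    fun z => funext fun x => (hline z x).deriv
  rw [mulVec_fin_two] at h
  have h₀ : 2 * c 0 + b₁ * c 1 = 0 := by simpa using congrFun h 0
  have h₁ : b₂ * c 0 + 2 * c 1 = 0 := by simpa using congrFun h 1
  have hright : π / 2 ∈ Icc (-(π / 2)) (π / 2) := by constructor <;> linarith [pi_pos]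
  refine ⟨fun ω => (ω + π / 2) • c 0, fun ω => (ω + π / 2) • c 1,
    fun x => (hline _ x).differentiableAt, by rw [hderiv]; fun_prop,
    fun x => (hline _ x).differentiableAt, by rw [hderiv]; fun_prop, ?_,
    fun _ _ => by rw [hderiv]; simp, fun _ _ => by rw [hderiv]; simp, by simp, ?_, by simp, ?_⟩
  · have hπ : π / 2 + π / 2 ≠ 0 := by linarith [pi_pos]
    obtain ⟨i, hi⟩ := Function.ne_iff.mp hc
    fin_cases i
    · exact Or.inl ⟨π / 2, hright, smul_ne_zero hπ hi⟩
    · exact Or.inr ⟨π / 2, hright, smul_ne_zero hπ hi⟩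
  · simp only [Complex.real_smul]; push_cast; linear_combination (π / 2 : ℂ) * h₀
  · simp only [Complex.real_smul]; push_cast; linear_combination (π / 2 : ℂ) * h₁

theorem system_zero_eigenvalue_iff (b₁ b₂ : ℝ) :
    NSEigen b₁ b₂ 0 ↔ b₁ * b₂ = 4 := by
  have hdet : !![2, (b₁ : ℂ); b₂, 2].det = 0 ↔ b₁ * b₂ = 4 := by
    rw [det_fin_two_of, sub_eq_zero, eq_comm]
    norm_cast
  rw [← hdet, ← exists_mulVec_eq_zero_iff]
  exact ⟨exists_mulVec_eq_zero_of_nsEigen_zero,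
    fun ⟨_, hc, h⟩ => nsEigen_zero_of_mulVec_eq_zero hc h⟩
end

section
/- Let b₁, b₂ ∈ ℝ with b₁·b₂ ≠ 4, let k be a nonzero integer, and set λ = 2k·i. Then for every pair of twice differentiable functions φ₁⁰, φ₂⁰ : ℝ → ℂ, not both identically zero on [−π/2, π/2], satisfying (φⱼ⁰)''(ω) = λ²·φⱼ⁰(ω) on [−π/2, π/2] and φ₁⁰(−π/2) = 0, φ₁⁰(π/2) + b₁·φ₂⁰(0) = 0, φ₂⁰(−π/2) = 0, φ₂⁰(π/2) + b₂·φ₁⁰(0) = 0, there exists NO pair of twice differentiable φ₁, φ₂ : ℝ → ℂ with φⱼ''(ω) − λ²·φⱼ(ω) = 2λ·φⱼ⁰(ω) for all ω ∈ [−π/2, π/2] (j = 1, 2) and φ₁(−π/2) = 0, φ₁(π/2) + b₁·φ₂(0) = 0, φ₂(−π/2) = 0, φ₂(π/2) + b₂·φ₁(0) = 0. (That is, the eigenvalue λ = 2ki of NS(b₁, b₂) has no associated vectors.) -/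
/-!
Put `K = 2k`, so that `λ² = -K²`. Wronskians of a solution of `φ'' = -K²φ` against
`sin (K (ω + π/2))` and `cos (K (ω + π/2))` are constant, hence an eigenfunction vanishing at `-π/2`
is `d/K · sin (K (ω + π/2))` with `d = φ'(-π/2)`; in particular it vanishes at `0` and `π/2`.
For an associated vector the Wronskian against the sine picks up the resonant term `∫ sin²`,
and evaluating it at `π/2` and `0` gives `K φ(π/2) = -iπd` and `K cos(kπ) φ(0) = -iπd/2`.
The nonlocal conditions become `2γd₁ + b₁d₂ = 0 = 2γd₂ + b₂d₁` with `γ = cos kπ = ±1`, whose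
determinant `4 - b₁b₂` is nonzero; so `d₁ = d₂ = 0` and the eigenvector vanishes.
-/

open Real Set

theorem eq_of_hasDerivAt_eq_on_Icc {E : Type*} [NormedAddCommGroup E] [NormedSpace ℝ E]
    {a b : ℝ} {f g f' : ℝ → E}
    (hf : ∀ x ∈ Icc a b, HasDerivAt f (f' x) x) (hg : ∀ x ∈ Icc a b, HasDerivAt g (f' x) x)
    (ha : f a = g a) : ∀ x ∈ Icc a b, f x = g x :=
  eq_of_has_deriv_right_eq (fun x hx => (hf x (Ico_subset_Icc_self hx)).hasDerivWithinAt)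
    (fun x hx => (hg x (Ico_subset_Icc_self hx)).hasDerivWithinAt)
    (fun x hx => (hf x hx).continuousAt.continuousWithinAt)
    (fun x hx => (hg x hx).continuousAt.continuousWithinAt) ha

theorem hasDerivAt_wronskian {f u u' : ℝ → ℂ} {x : ℝ} {v : ℂ}
    (hf : DifferentiableAt ℝ f x) (hf' : DifferentiableAt ℝ (deriv f) x)
    (hu : HasDerivAt u (u' x) x) (hu' : HasDerivAt u' v x) :
    HasDerivAt (fun ω => f ω * u' ω - deriv f ω * u ω)
      (f x * v - deriv (deriv f) x * u x) x :=
  ((hf.hasDerivAt.mul hu').sub (hf'.hasDerivAt.mul hu)).congr_deriv (by ring)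

namespace Complex

variable (K : ℂ) (a x : ℝ)

theorem hasDerivAt_sin_mul_sub :
    HasDerivAt (fun ω : ℝ => sin (K * (ω - a))) (K * cos (K * (x - a))) x := by
  have h := (((hasDerivAt_id (x : ℂ)).sub_const (a : ℂ)).const_mul K).csin.comp_ofReal
  simpa [mul_comm] using h

theorem hasDerivAt_cos_mul_sub :
    HasDerivAt (fun ω : ℝ => cos (K * (ω - a))) (-(K * sin (K * (x - a)))) x := by
  have h := (((hasDerivAt_id (x : ℂ)).sub_const (a : ℂ)).const_mul K).ccos.comp_ofReal
  simpa [mul_comm] using h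

end Complex

open Complex in
theorem mul_eq_deriv_mul_sin_of_ode {a b : ℝ} {K : ℂ} {f : ℝ → ℂ} (hf : Differentiable ℝ f)
    (hf' : Differentiable ℝ (deriv f)) (hode : ∀ x ∈ Icc a b, deriv (deriv f) x = -K ^ 2 * f x)
    (ha : f a = 0) : ∀ x ∈ Icc a b, K * f x = deriv f a * sin (K * (x - a)) := by
  have hsin : ∀ x ∈ Icc a b,
      f x * (K * cos (K * (x - a))) - deriv f x * sin (K * (x - a)) = 0 :=
    eq_of_hasDerivAt_eq_on_Icc (f' := fun _ => 0)
      (fun x hx => (hasDerivAt_wronskian (hf x) (hf' x) (hasDerivAt_sin_mul_sub K a x)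
        ((hasDerivAt_cos_mul_sub K a x).const_mul K)).congr_deriv (by
          rw [hode x hx]; ring))
      (fun x _ => hasDerivAt_const x 0) (by simp [ha])
  have hcos : ∀ x ∈ Icc a b,
      f x * -(K * sin (K * (x - a))) - deriv f x * cos (K * (x - a)) = -deriv f a :=
    eq_of_hasDerivAt_eq_on_Icc (f' := fun _ => 0)
      (fun x hx => (hasDerivAt_wronskian (hf x) (hf' x) (hasDerivAt_cos_mul_sub K a x)
        ((hasDerivAt_sin_mul_sub K a x).const_mul K).neg).congr_deriv (by
          rw [hode x hx]; ring))
      (fun x _ => hasDerivAt_const x _) (by simp [ha])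
  intro x hx
  linear_combination cos (K * (x - a)) * hsin x hx - sin (K * (x - a)) * hcos x hx
    - K * f x * Complex.sin_sq_add_cos_sq (K * (x - a))

open Complex in
/-- The right-hand side is `-μ ∫ₐˣ sin² (K (t - a)) dt`. -/
theorem wronskian_sin_eq_of_resonant_ode {a b : ℝ} {K μ : ℂ} {g : ℝ → ℂ} (hK : K ≠ 0)
    (hg : Differentiable ℝ g) (hg' : Differentiable ℝ (deriv g))
    (hode : ∀ x ∈ Icc a b, deriv (deriv g) x = -K ^ 2 * g x + μ * sin (K * (x - a)))
    (ha : g a = 0) :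
    ∀ x ∈ Icc a b, g x * (K * cos (K * (x - a))) - deriv g x * sin (K * (x - a))
      = -μ * ((x - a) / 2 - sin (2 * K * (x - a)) / (4 * K)) := by
  refine eq_of_hasDerivAt_eq_on_Icc (f' := fun x => -μ * sin (K * (x - a)) ^ 2)
    (fun x hx => (hasDerivAt_wronskian (hg x) (hg' x) (hasDerivAt_sin_mul_sub K a x)
      ((hasDerivAt_cos_mul_sub K a x).const_mul K)).congr_deriv (by rw [hode x hx]; ring))
    (fun x _ => ?_) (by simp [ha])
  have hline := ((hasDerivAt_id x).ofReal_comp.sub_const (a : ℂ)).div_const 2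
  have hsin2 := (hasDerivAt_sin_mul_sub (2 * K) a x).div_const (4 * K)
  refine ((hline.sub hsin2).const_mul (-μ)).congr_deriv ?_
  have hdouble : cos (2 * K * (x - a)) = 1 - 2 * sin (K * (x - a)) ^ 2 := by
    rw [mul_assoc, Complex.cos_two_mul]
    linear_combination 2 * Complex.sin_sq_add_cos_sq (K * (x - a))
  rw [hdouble, Complex.ofReal_one]
  field_simp
  ring

theorem Complex.cos_int_mul_pi_sq (k : ℤ) : Complex.cos (k * π) ^ 2 = 1 := by
  simpa [Complex.sin_int_mul_pi] using Complex.sin_sq_add_cos_sq (k * π)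

theorem eigenfunction_eq_sin (k : ℤ) {f : ℝ → ℂ} (hf : Differentiable ℝ f)
    (hf' : Differentiable ℝ (deriv f))
    (hode : ∀ x ∈ Icc (-(π / 2)) (π / 2),
      deriv (deriv f) x = ((2 * (k : ℂ)) * Complex.I) ^ 2 * f x)
    (ha : f (-(π / 2)) = 0) :
    ∀ x ∈ Icc (-(π / 2)) (π / 2),
      2 * k * f x = deriv f (-(π / 2)) * Complex.sin (2 * k * (x - (-(π / 2) : ℝ))) :=
  mul_eq_deriv_mul_sin_of_ode hf hf'
    (fun x hx => by rw [hode x hx, mul_pow, Complex.I_sq]; ring) ha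

theorem associated_boundary_values {k : ℤ} (hk : k ≠ 0) {f g : ℝ → ℂ}
    (hf : Differentiable ℝ f) (hf' : Differentiable ℝ (deriv f))
    (hode : ∀ x ∈ Icc (-(π / 2)) (π / 2),
      deriv (deriv f) x = ((2 * (k : ℂ)) * Complex.I) ^ 2 * f x)
    (ha : f (-(π / 2)) = 0)
    (hg : Differentiable ℝ g) (hg' : Differentiable ℝ (deriv g))
    (hode' : ∀ x ∈ Icc (-(π / 2)) (π / 2),
      deriv (deriv g) x - ((2 * (k : ℂ)) * Complex.I) ^ 2 * g x
        = 2 * ((2 * (k : ℂ)) * Complex.I) * f x)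
    (ha' : g (-(π / 2)) = 0) :
    2 * k * g (π / 2) = -(Complex.I * π * deriv f (-(π / 2))) ∧
      2 * k * Complex.cos (k * π) * g 0 = -(Complex.I * π * deriv f (-(π / 2))) / 2 := by
  have hK : (2 * k : ℂ) ≠ 0 := mul_ne_zero two_ne_zero (Int.cast_ne_zero.2 hk)
  have heigen := eigenfunction_eq_sin k hf hf' hode ha
  have hW := wronskian_sin_eq_of_resonant_ode (μ := 2 * Complex.I * deriv f (-(π / 2))) hK hg hg'
    (fun x hx => by
      linear_combination
        hode' x hx + 2 * Complex.I * heigen x hx + (2 * k) ^ 2 * g x * Complex.I_sq)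
    ha'
  have hs : Complex.sin (k * π) = 0 := Complex.sin_int_mul_pi k
  have hπ2 := hW (π / 2) ⟨by linarith [pi_pos], le_rfl⟩
  have h0 := hW 0 ⟨by linarith [pi_pos], by linarith [pi_pos]⟩
  rw [show (2 * k : ℂ) * (((π / 2 : ℝ) : ℂ) - ((-(π / 2) : ℝ) : ℂ)) = 2 * (k * π) by
      push_cast; ring,
    show 2 * (2 * k : ℂ) * (((π / 2 : ℝ) : ℂ) - ((-(π / 2) : ℝ) : ℂ)) = 2 * (2 * (k * π)) by
      push_cast; ring] at hπ2
  rw [show (2 * k : ℂ) * (((0 : ℝ) : ℂ) - ((-(π / 2) : ℝ) : ℂ)) = k * π by push_cast; ring,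
    show 2 * (2 * k : ℂ) * (((0 : ℝ) : ℂ) - ((-(π / 2) : ℝ) : ℂ)) = 2 * (k * π) by
      push_cast; ring] at h0
  simp only [Complex.sin_two_mul, Complex.cos_two_mul, hs, Complex.cos_int_mul_pi_sq] at hπ2 h0
  push_cast at hπ2 h0
  constructor
  · linear_combination hπ2
  · linear_combination h0

theorem eq_zero_of_nonlocal_system {γ b₁ b₂ x y : ℂ} (hγ : γ ^ 2 = 1) (hb : b₁ * b₂ ≠ 4)
    (h₁ : 2 * γ * x + b₁ * y = 0) (h₂ : 2 * γ * y + b₂ * x = 0) : x = 0 ∧ y = 0 := by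
  have hdet : (4 : ℂ) - b₁ * b₂ ≠ 0 := sub_ne_zero.2 hb.symm
  constructor
  · refine (mul_eq_zero.1 (?_ : (4 - b₁ * b₂) * x = 0)).resolve_left hdet
    linear_combination 2 * γ * h₁ - b₁ * h₂ - 4 * x * hγ
  · refine (mul_eq_zero.1 (?_ : (4 - b₁ * b₂) * y = 0)).resolve_left hdet
    linear_combination 2 * γ * h₂ - b₂ * h₁ - 4 * y * hγ

theorem system_no_associated_vector_even (b₁ b₂ : ℝ) (hb : b₁ * b₂ ≠ 4)
    (k : ℤ) (hk : k ≠ 0) :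
    ∀ φ₁₀ φ₂₀ : ℝ → ℂ,
      Differentiable ℝ φ₁₀ → Differentiable ℝ (deriv φ₁₀) →
      Differentiable ℝ φ₂₀ → Differentiable ℝ (deriv φ₂₀) →
      ((∃ ω ∈ Icc (-(π / 2)) (π / 2), φ₁₀ ω ≠ 0) ∨
        (∃ ω ∈ Icc (-(π / 2)) (π / 2), φ₂₀ ω ≠ 0)) →
      (∀ ω ∈ Icc (-(π / 2)) (π / 2),
        deriv (deriv φ₁₀) ω = ((2 * (k : ℂ)) * Complex.I) ^ 2 * φ₁₀ ω) →
      (∀ ω ∈ Icc (-(π / 2)) (π / 2),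
        deriv (deriv φ₂₀) ω = ((2 * (k : ℂ)) * Complex.I) ^ 2 * φ₂₀ ω) →
      φ₁₀ (-(π / 2)) = 0 → φ₁₀ (π / 2) + (b₁ : ℂ) * φ₂₀ 0 = 0 →
      φ₂₀ (-(π / 2)) = 0 → φ₂₀ (π / 2) + (b₂ : ℂ) * φ₁₀ 0 = 0 →
      ¬ ∃ φ₁ φ₂ : ℝ → ℂ,
          Differentiable ℝ φ₁ ∧ Differentiable ℝ (deriv φ₁) ∧
          Differentiable ℝ φ₂ ∧ Differentiable ℝ (deriv φ₂) ∧
          (∀ ω ∈ Icc (-(π / 2)) (π / 2),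
            deriv (deriv φ₁) ω - ((2 * (k : ℂ)) * Complex.I) ^ 2 * φ₁ ω
              = 2 * ((2 * (k : ℂ)) * Complex.I) * φ₁₀ ω) ∧
          (∀ ω ∈ Icc (-(π / 2)) (π / 2),
            deriv (deriv φ₂) ω - ((2 * (k : ℂ)) * Complex.I) ^ 2 * φ₂ ω
              = 2 * ((2 * (k : ℂ)) * Complex.I) * φ₂₀ ω) ∧
          φ₁ (-(π / 2)) = 0 ∧ φ₁ (π / 2) + (b₁ : ℂ) * φ₂ 0 = 0 ∧
          φ₂ (-(π / 2)) = 0 ∧ φ₂ (π / 2) + (b₂ : ℂ) * φ₁ 0 = 0 := by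
  intro φ₁₀ φ₂₀ hφ₁₀ hφ₁₀' hφ₂₀ hφ₂₀' hnz hode₁₀ hode₂₀ ha₁₀ _ ha₂₀ _
  rintro ⟨φ₁, φ₂, hφ₁, hφ₁', hφ₂, hφ₂', hode₁, hode₂, ha₁, hb₁, ha₂, hb₂⟩
  obtain ⟨hπ₁, h0₁⟩ := associated_boundary_values hk hφ₁₀ hφ₁₀' hode₁₀ ha₁₀ hφ₁ hφ₁' hode₁ ha₁
  obtain ⟨hπ₂, h0₂⟩ := associated_boundary_values hk hφ₂₀ hφ₂₀' hode₂₀ ha₂₀ hφ₂ hφ₂' hode₂ ha₂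
  have hIπ : Complex.I * π / 2 ≠ 0 := by simp [pi_ne_zero]
  obtain ⟨hd₁, hd₂⟩ : deriv φ₁₀ (-(π / 2)) = 0 ∧ deriv φ₂₀ (-(π / 2)) = 0 := by
    refine eq_zero_of_nonlocal_system (b₁ := b₁) (b₂ := b₂) (Complex.cos_int_mul_pi_sq k)
      (by exact_mod_cast hb)
      (mul_left_cancel₀ hIπ ?_) (mul_left_cancel₀ hIπ ?_)
    · linear_combination Complex.cos (k * π) * (hπ₁ - 2 * k * hb₁) + b₁ * h0₂
    · linear_combination Complex.cos (k * π) * (hπ₂ - 2 * k * hb₂) + b₂ * h0₁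
  have hK : (2 * k : ℂ) ≠ 0 := mul_ne_zero two_ne_zero (Int.cast_ne_zero.2 hk)
  rcases hnz with ⟨ω, hω, hne⟩ | ⟨ω, hω, hne⟩
  · refine hne ((mul_eq_zero.1 ?_).resolve_left hK)
    rw [eigenfunction_eq_sin k hφ₁₀ hφ₁₀' hode₁₀ ha₁₀ ω hω, hd₁, zero_mul]
  · refine hne ((mul_eq_zero.1 ?_).resolve_left hK)
    rw [eigenfunction_eq_sin k hφ₂₀ hφ₂₀' hode₂₀ ha₂₀ ω hω, hd₂, zero_mul]
end

section
/- Let b₁ ∈ ℝ with b₁ ≠ 0 and set b₂ = 0; let k ∈ ℤ and set λ = (2k+1)·i. Then the pair φ₁⁰(ω) = cos((2k+1)ω), φ₂⁰(ω) = 0 is an eigenvector of the nonlocal system NS(b₁, 0) for the eigenvalue λ, and moreover there EXISTS a pair of twice differentiable functions φ₁, φ₂ : ℝ → ℂ with φⱼ''(ω) − λ²·φⱼ(ω) = 2λ·φⱼ⁰(ω) for all ω ∈ [−π/2, π/2] (j = 1, 2) and φ₁(−π/2) = 0, φ₁(π/2) + b₁·φ₂(0) = 0, φ₂(−π/2) =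 0, φ₂(π/2) = 0. (That is, the eigenvalue λ = (2k+1)i of NS(b₁, 0) has an associated vector.) -/
/-!
With `μ = 2k + 1` we have `λ² = -μ²`, and `cos (μ ω)` vanishes at `±π/2`. The forcing term
`2λ cos (μ ω)` is resonant, so the first component of the associated vector is the secular
solution `i (ω + π/2) sin (μ ω)`, shifted so as to vanish at `-π/2`. Its nonzero value at `π/2`
is absorbed by the nonlocal condition, taking for the second component the homogeneous solution
`c cos (μ ω)` with `c = -φ₁(π/2) / b₁`.
-/

open Real Set

section SecondDeriv

variable {𝕜 F 𝔸 : Type*} [NontriviallyNormedField 𝕜] [NormedAddCommGroup F] [NormedSpace 𝕜 F]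
  [NormedRing 𝔸] [NormedAlgebra 𝕜 𝔸]

def HasSecondDeriv (f f'' : 𝕜 → F) : Prop :=
  ∃ f' : 𝕜 → F, (∀ x, HasDerivAt f (f' x) x) ∧ ∀ x, HasDerivAt f' (f'' x) x

namespace HasSecondDeriv

variable {f f'' : 𝕜 → F}

theorem differentiable (h : HasSecondDeriv f f'') : Differentiable 𝕜 f := by
  obtain ⟨_, hf, -⟩ := h
  exact fun x => (hf x).differentiableAt

theorem exists_deriv_eq (h : HasSecondDeriv f f'') :
    ∃ f' : 𝕜 → F, deriv f = f' ∧ ∀ x, HasDerivAt f' (f'' x) x := by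
  obtain ⟨f', hf, hf'⟩ := h
  exact ⟨f', funext fun x => (hf x).deriv, hf'⟩

theorem differentiable_deriv (h : HasSecondDeriv f f'') : Differentiable 𝕜 (deriv f) := by
  obtain ⟨f', hf, hf'⟩ := h.exists_deriv_eq
  exact hf ▸ fun x => (hf' x).differentiableAt

theorem deriv_deriv (h : HasSecondDeriv f f'') : deriv (deriv f) = f'' := by
  obtain ⟨f', hf, hf'⟩ := h.exists_deriv_eq
  exact hf ▸ funext fun x => (hf' x).deriv

theorem const_mul {g g'' : 𝕜 → 𝔸} (h : HasSecondDeriv g g'') (c : 𝔸) :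
    HasSecondDeriv (fun x => c * g x) (fun x => c * g'' x) := by
  obtain ⟨g', hg, hg'⟩ := h
  exact ⟨fun x => c * g' x, fun x => (hg x).const_mul c, fun x => (hg' x).const_mul c⟩

end HasSecondDeriv

end SecondDeriv

namespace Complex

variable (μ : ℂ)

theorem hasDerivAt_cos_mul_ofReal (t : ℝ) :
    HasDerivAt (fun s : ℝ => cos (μ * s)) (-μ * sin (μ * t)) t := by
  simpa [mul_comm] using (((hasDerivAt_id (t : ℂ)).const_mul μ).ccos).comp_ofReal

theorem hasDerivAt_sin_mul_ofReal (t : ℝ) :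
    HasDerivAt (fun s : ℝ => sin (μ * s)) (μ * cos (μ * t)) t := by
  simpa [mul_comm] using (((hasDerivAt_id (t : ℂ)).const_mul μ).csin).comp_ofReal

theorem hasSecondDeriv_cos_mul_ofReal :
    HasSecondDeriv (fun s : ℝ => cos (μ * s)) (fun t => -μ ^ 2 * cos (μ * t)) :=
  ⟨fun t => -μ * sin (μ * t), hasDerivAt_cos_mul_ofReal μ, fun t =>
    ((hasDerivAt_sin_mul_ofReal μ t).const_mul (-μ)).congr_deriv (by ring)⟩

theorem hasSecondDeriv_add_mul_sin_mul_ofReal (a : ℂ) :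
    HasSecondDeriv (fun s : ℝ => (s + a) * sin (μ * s))
      (fun t => 2 * μ * cos (μ * t) - μ ^ 2 * ((t + a) * sin (μ * t))) := by
  have hlin (t : ℝ) : HasDerivAt (fun s : ℝ => (s : ℂ) + a) 1 t :=
    ((hasDerivAt_id (t : ℂ)).add_const a).comp_ofReal
  exact ⟨fun t => sin (μ * t) + (t + a) * (μ * cos (μ * t)),
    fun t => ((hlin t).mul (hasDerivAt_sin_mul_ofReal μ t)).congr_deriv (by ring),
    fun t => ((hasDerivAt_sin_mul_ofReal μ t).add
      ((hlin t).mul ((hasDerivAt_cos_mul_ofReal μ t).const_mul μ))).congr_deriv (by ring)⟩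

theorem cos_odd_mul_pi_div_two (k : ℤ) : cos ((2 * k + 1) * ((π / 2 : ℝ) : ℂ)) = 0 :=
  cos_eq_zero_iff.mpr ⟨k, by push_cast; ring⟩

end Complex

theorem system_has_associated_vector_odd (b₁ : ℝ) (hb : b₁ ≠ 0) (k : ℤ) :
    -- `(φ₁⁰, φ₂⁰) = (cos((2k+1)ω), 0)` is an eigenvector of `NS(b₁, 0)` for `λ = (2k+1)i`:
    (((∃ ω ∈ Icc (-(π / 2)) (π / 2),
          Complex.cos ((2 * (k : ℂ) + 1) * (ω : ℂ)) ≠ 0) ∨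
        (∃ ω ∈ Icc (-(π / 2)) (π / 2), (0 : ℂ) ≠ 0)) ∧
      (∀ ω ∈ Icc (-(π / 2)) (π / 2),
        deriv (deriv (fun t : ℝ => Complex.cos ((2 * (k : ℂ) + 1) * (t : ℂ)))) ω
          = ((2 * (k : ℂ) + 1) * Complex.I) ^ 2 * Complex.cos ((2 * (k : ℂ) + 1) * (ω : ℂ))) ∧
      (∀ ω ∈ Icc (-(π / 2)) (π / 2),
        deriv (deriv (fun _ : ℝ => (0 : ℂ))) ω
          = ((2 * (k : ℂ) + 1) * Complex.I) ^ 2 * 0) ∧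
      Complex.cos ((2 * (k : ℂ) + 1) * ((-(π / 2) : ℝ) : ℂ)) = 0 ∧
      Complex.cos ((2 * (k : ℂ) + 1) * (((π / 2) : ℝ) : ℂ)) + (b₁ : ℂ) * 0 = 0 ∧
      (0 : ℂ) = 0 ∧ (0 : ℂ) = 0) ∧
    -- and it has an associated vector:
    ∃ φ₁ φ₂ : ℝ → ℂ,
      Differentiable ℝ φ₁ ∧ Differentiable ℝ (deriv φ₁) ∧
      Differentiable ℝ φ₂ ∧ Differentiable ℝ (deriv φ₂) ∧
      (∀ ω ∈ Icc (-(π / 2)) (π / 2),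
        deriv (deriv φ₁) ω - ((2 * (k : ℂ) + 1) * Complex.I) ^ 2 * φ₁ ω
          = 2 * ((2 * (k : ℂ) + 1) * Complex.I) * Complex.cos ((2 * (k : ℂ) + 1) * (ω : ℂ))) ∧
      (∀ ω ∈ Icc (-(π / 2)) (π / 2),
        deriv (deriv φ₂) ω - ((2 * (k : ℂ) + 1) * Complex.I) ^ 2 * φ₂ ω
          = 2 * ((2 * (k : ℂ) + 1) * Complex.I) * 0) ∧
      φ₁ (-(π / 2)) = 0 ∧ φ₁ (π / 2) + (b₁ : ℂ) * φ₂ 0 = 0 ∧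
      φ₂ (-(π / 2)) = 0 ∧ φ₂ (π / 2) = 0 := by
  set μ : ℂ := 2 * k + 1
  have hsq : (μ * Complex.I) ^ 2 = -μ ^ 2 := by rw [mul_pow, Complex.I_sq, mul_neg_one]
  have hcos := Complex.hasSecondDeriv_cos_mul_ofReal μ
  have hcos_right : Complex.cos (μ * ((π / 2 : ℝ) : ℂ)) = 0 := Complex.cos_odd_mul_pi_div_two k
  have hcos_left : Complex.cos (μ * ((-(π / 2) : ℝ) : ℂ)) = 0 := by
    rw [Complex.ofReal_neg, mul_neg, Complex.cos_neg, hcos_right]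
  constructor
  · have hzero : (0 : ℝ) ∈ Icc (-(π / 2)) (π / 2) := ⟨by linarith [pi_pos], by linarith [pi_pos]⟩
    exact ⟨.inl ⟨0, hzero, by simp⟩, fun ω _ => by rw [hcos.deriv_deriv, hsq], by simp,
      hcos_left, by rw [hcos_right, mul_zero, add_zero], rfl, rfl⟩
  set φ₁ : ℝ → ℂ := fun s => Complex.I * ((s + ((π / 2 : ℝ) : ℂ)) * Complex.sin (μ * s))
  set c : ℂ := -φ₁ (π / 2) / b₁
  have hφ₁ := (Complex.hasSecondDeriv_add_mul_sin_mul_ofReal μ ((π / 2 : ℝ) : ℂ)).const_mul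
    Complex.I
  have hφ₂ := hcos.const_mul c
  refine ⟨φ₁, fun s => c * Complex.cos (μ * s), hφ₁.differentiable, hφ₁.differentiable_deriv,
    hφ₂.differentiable, hφ₂.differentiable_deriv,
    fun ω _ => by rw [hφ₁.deriv_deriv, hsq]; ring, fun ω _ => by rw [hφ₂.deriv_deriv, hsq]; ring,
    by simp [φ₁], ?_, mul_eq_zero_of_right c hcos_left, mul_eq_zero_of_right c hcos_right⟩
  simp only [Complex.ofReal_zero, mul_zero, Complex.cos_zero, mul_one, c]
  field_simp [Complex.ofReal_ne_zero.mpr hb]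
  ring
end
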